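/- arXiv:0811.4626 — 8 statements merged into one kernel-verified Lean document; each statement's English description precedes it below -/
import Mathlib

section
/- Let k be a field, A a finite-dimensional k-algebra, and let U and V be finitely generated A-modules with V indecomposable and not projective. Let φ : U → V be an A-module homomorphism. Then φ is a split epimorphism (i.e. there exists an A-module homomorphism σ : V → U with φ ∘ σ = id_V) if and only if there exists an A-module homomorphism σ : V → U such that φ ∘ σ − id_V factors through a projective A-module. -/
universe u v w

def FactorsThroughProjective {A : Type u} [Ring A] {M : Type v} {N : Type w}
    [AddCommGroup M] [Module A M] [AddCommGroup N] [Module A N]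
    (φ : M →ₗ[A] N) : Prop :=
  ∃ (Q : ModuleCat.{max u v w} A) (f : M →ₗ[A] Q) (g : Q →ₗ[A] N),
    Module.Projective A Q ∧ g ∘ₗ f = φ

def IsIndecomposableModule (A : Type u) (M : Type v) [Ring A] [AddCommGroup M]
    [Module A M] : Prop :=
  (∃ m : M, m ≠ 0) ∧
    ∀ W W' : Submodule A M, W ⊓ W' = ⊥ → W ⊔ W' = ⊤ → W = ⊥ ∨ W' = ⊥

theorem stmt0 {k A : Type u} [Field k] [Ring A] [Algebra k A] [FiniteDimensional k A]
    {U V : Type u} [AddCommGroup U] [Module A U] [AddCommGroup V] [Module A V]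
    [Module.Finite A U] [Module.Finite A V]
    (hV : IsIndecomposableModule A V) (hVproj : ¬ Module.Projective A V)
    (φ : U →ₗ[A] V) :
    (∃ σ : V →ₗ[A] U, φ ∘ₗ σ = LinearMap.id) ↔
      (∃ σ : V →ₗ[A] U, FactorsThroughProjective (φ ∘ₗ σ - LinearMap.id)) := by
  constructor
  · rintro ⟨σ, hσ⟩
    exact ⟨σ, ModuleCat.of A PUnit.{u+1}, 0, 0, inferInstance,
      by rw [hσ, sub_self, LinearMap.comp_zero]⟩
  · rintro ⟨σ, Q, f, g, hQ, hgf⟩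
    haveI : IsNoetherianRing A := isNoetherian_of_tower k (inferInstance : IsNoetherian k A)
    haveI : IsArtinianRing A := isArtinian_of_tower k (inferInstance : IsArtinian k A)
    haveI : IsNoetherian A V := inferInstance
    haveI : IsArtinian A V := inferInstance
    haveI := hQ
    set e : Module.End A V := g ∘ₗ f with he
    obtain ⟨n, hn⟩ := Filter.eventually_atTop.mp
      (LinearMap.eventually_isCompl_ker_pow_range_pow e)
    have hc := hn (max n 1) (le_max_left _ _)
    rcases hV.2 _ _ (disjoint_iff.mp hc.disjoint) (codisjoint_iff.mp hc.codisjoint) with h | h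
    · -- kernel of e^m is ⊥ : e is injective, hence bijective, hence V is a retract of Q
      exfalso
      apply hVproj
      have hinj : Function.Injective (e ^ max n 1) := LinearMap.ker_eq_bot.mp h
      have hinj' : Function.Injective e := by
        have : e ^ max n 1 = (e ^ (max n 1 - 1)) ∘ₗ e := by
          rw [← Module.End.mul_eq_comp, ← pow_succ]
          congr 1
          omega
        rw [this] at hinj
        exact Function.Injective.of_comp hinj
      have hbij : Function.Bijective e :=
        IsArtinian.bijective_of_injective_endomorphism e hinj'
      have hu : IsUnit e := Module.End.isUnit_iff e |>.mpr hbij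
      obtain ⟨u, hue⟩ := hu
      refine Module.Projective.of_split f ((↑u⁻¹ : Module.End A V) ∘ₗ g) ?_
      have : ((↑u⁻¹ : Module.End A V) ∘ₗ g) ∘ₗ f = (↑u⁻¹ : Module.End A V) * e := by
        rw [Module.End.mul_eq_comp, he, LinearMap.comp_assoc]
      rw [this, ← hue, Units.inv_mul]
      rfl
    · -- range of e^m is ⊥ : e is nilpotent, so φ ∘ σ = e + 1 is a unit
      have hnil : IsNilpotent e := ⟨max n 1, LinearMap.range_eq_bot.mp h⟩
      have hφσ : φ ∘ₗ σ = e + 1 := by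
        rw [hgf, ← Module.End.one_eq_id]; abel
      have hu : IsUnit (e + 1) := hnil.isUnit_add_one
      obtain ⟨u, hue⟩ := hu
      refine ⟨σ ∘ₗ (↑u⁻¹ : Module.End A V), ?_⟩
      have : φ ∘ₗ σ ∘ₗ (↑u⁻¹ : Module.End A V) = (e + 1) * (↑u⁻¹ : Module.End A V) := by
        rw [Module.End.mul_eq_comp, ← hφσ, LinearMap.comp_assoc]
      rw [this, ← hue, Units.mul_inv]
      rfl
end

section
/- Let k be a field of prime characteristic p and A a finite-dimensional k-algebra. Let x be a central element of A with x^p = 0 and x^{p−1} ≠ 0, and suppose that A is free as a k⟨x⟩-module. Set M = A·x^{p−1}, a left A-submodule of A. Then every A-module endomorphism of M that factors through a projective A-module is zero; in particular the stable endomorphism algebra of M equals End_A(M). -/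
universe u v w

/-- For `x` in a `k`-algebra `A`, the subalgebra `k⟨x⟩` generated by `x`;
`A` is a module over it via multiplication. -/
noncomputable def kGen (k : Type*) {A : Type*} [Field k] [Ring A] [Algebra k A]
    (x : A) : Subalgebra k A :=
  Algebra.adjoin k {x}

section Aux

variable {k A : Type} [Field k] [Ring A] [Algebra k A]

open Polynomial

/-- Core step for the polynomial lemma. -/
lemma aux_core (p : ℕ) (hp2 : 2 ≤ p) (x : A) (hx : ∀ a : A, a * x = x * a)
    (hxp : x ^ p = 0) (hxp1 : x ^ (p - 1) ≠ 0) (f : Polynomial k)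
    (hIH : ∀ m : ℕ, x ^ (m + 1) * aeval x f.divX = 0 →
      ∃ c : k, x ^ m * aeval x f.divX = c • x ^ (p - 1))
    (m : ℕ) (hm1 : x ^ (m + 1) * aeval x f = 0) :
    ∃ c : k, x ^ m * aeval x f = c • x ^ (p - 1) := by
  have hdec : aeval x f = x * aeval x f.divX + algebraMap k A (f.coeff 0) := by
    conv_lhs => rw [← f.divX_mul_X_add]
    rw [map_add, map_mul, aeval_X, aeval_C, hx]
  by_cases hple : p ≤ m + 1
  · by_cases hpm : p ≤ m
    · refine ⟨0, ?_⟩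
      have hxm : x ^ m = 0 := by
        have : x ^ m = x ^ p * x ^ (m - p) := by rw [← pow_add]; congr 1; omega
        rw [this, hxp, zero_mul]
      rw [hxm, zero_mul, zero_smul]
    · have hmp : m = p - 1 := by omega
      refine ⟨f.coeff 0, ?_⟩
      rw [hdec, mul_add, ← mul_assoc, ← pow_succ, hmp]
      have h1 : x ^ (p - 1 + 1) = 0 := by
        have : p - 1 + 1 = p := by omega
        rw [this, hxp]
      rw [h1, zero_mul, zero_add, ← Algebra.commutes, ← Algebra.smul_def]
  · -- m + 2 ≤ p
    have hm2 : m + 2 ≤ p := by omega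
    have h1 : x ^ (m + 2) * aeval x f.divX + (f.coeff 0) • x ^ (m + 1) = 0 := by
      rw [hdec, mul_add, ← mul_assoc, ← pow_succ, ← Algebra.commutes, ← Algebra.smul_def] at hm1
      exact hm1
    have h2 : (f.coeff 0) • x ^ (p - 1) = 0 := by
      have h3 := congrArg (fun a => x ^ (p - (m + 2)) * a) h1
      simp only [mul_add, mul_zero, ← mul_assoc, ← pow_add, mul_smul_comm] at h3
      have e1 : p - (m + 2) + (m + 2) = p := by omega
      have e2 : p - (m + 2) + (m + 1) = p - 1 := by omega
      rw [e1, e2, hxp, zero_mul, zero_add] at h3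
      exact h3
    have hc0 : f.coeff 0 = 0 := by
      rcases smul_eq_zero.mp h2 with h | h
      · exact h
      · exact absurd h hxp1
    rw [hc0, zero_smul, add_zero] at h1
    obtain ⟨c, hc⟩ := hIH (m + 1) (by rwa [show m + 1 + 1 = m + 2 from rfl])
    refine ⟨c, ?_⟩
    rw [hdec, hc0, map_zero, add_zero, ← mul_assoc, ← pow_succ]
    exact hc

/-- If `x * aeval x f = 0`, then `aeval x f` is a scalar multiple of `x^(p-1)`. -/
lemma aux_poly (p : ℕ) (hp2 : 2 ≤ p) (x : A) (hx : ∀ a : A, a * x = x * a)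
    (hxp : x ^ p = 0) (hxp1 : x ^ (p - 1) ≠ 0) :
    ∀ (f : Polynomial k) (m : ℕ), x ^ (m + 1) * aeval x f = 0 →
      ∃ c : k, x ^ m * aeval x f = c • x ^ (p - 1) := by
  suffices H : ∀ (N : ℕ) (f : Polynomial k), f.natDegree ≤ N → ∀ m : ℕ,
      x ^ (m + 1) * aeval x f = 0 → ∃ c : k, x ^ m * aeval x f = c • x ^ (p - 1) by
    intro f m hm
    exact H f.natDegree f le_rfl m hm
  intro N
  induction N with
  | zero =>
    intro f hf m hm
    refine aux_core p hp2 x hx hxp hxp1 f ?_ m hm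
    intro m' _
    have hdiv : f.divX = 0 :=
      Polynomial.divX_eq_zero_iff.mpr (Polynomial.eq_C_of_natDegree_le_zero hf)
    exact ⟨0, by rw [hdiv, map_zero, mul_zero, zero_smul]⟩
  | succ N ih =>
    intro f hf m hm
    refine aux_core p hp2 x hx hxp hxp1 f ?_ m hm
    intro m' hm'
    exact ih f.divX (by
      have := f.natDegree_divX_eq_natDegree_tsub_one
      omega) m' hm'

/-- Over a free `kGen k x`-module, the annihilator of `x` is `x^(p-1) * A`. -/
lemma aux_ann (p : ℕ) (hp2 : 2 ≤ p) (x : A) (hx : ∀ a : A, a * x = x * a)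
    (hxp : x ^ p = 0) (hxp1 : x ^ (p - 1) ≠ 0)
    (hfree : Module.Free (kGen k x) A) (a : A) (ha : x * a = 0) :
    ∃ b : A, a = x ^ (p - 1) * b := by
  haveI := hfree
  set R := kGen k x with hR
  let b := Module.Free.chooseBasis R A
  let ξ : R := ⟨x, Algebra.self_mem_adjoin_singleton k x⟩
  have hξa : ξ • a = 0 := ha
  have hr : ∀ i, ξ * (b.repr a) i = 0 := by
    intro i
    have h1 : b.repr (ξ • a) = ξ • b.repr a := map_smul _ _ _
    rw [hξa, map_zero] at h1
    have h2 : (ξ • b.repr a) i = (0 : _ →₀ R) i := DFunLike.congr_fun h1.symm i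
    rw [Finsupp.smul_apply, smul_eq_mul, Finsupp.zero_apply] at h2
    exact h2
  have hco : ∀ i, ∃ c : k, ((b.repr a) i : A) = c • x ^ (p - 1) := by
    intro i
    obtain ⟨f, hf⟩ : ∃ f : Polynomial k, Polynomial.aeval x f = ((b.repr a) i : A) := by
      have h4 : ((b.repr a) i : A) ∈ Algebra.adjoin k {x} := ((b.repr a) i).2
      rw [Algebra.adjoin_singleton_eq_range_aeval] at h4
      obtain ⟨f, hf⟩ := h4
      exact ⟨f, hf⟩
    have hxf : x ^ (0 + 1) * Polynomial.aeval x f = 0 := by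
      rw [zero_add, pow_one, hf]
      have h3 := congrArg (Subtype.val) (hr i)
      simpa using h3
    obtain ⟨c, hc⟩ := aux_poly p hp2 x hx hxp hxp1 f 0 hxf
    rw [pow_zero, one_mul] at hc
    exact ⟨c, by rw [← hf, hc]⟩
  choose c hc using hco
  refine ⟨∑ i ∈ (b.repr a).support, c i • (b i : A), ?_⟩
  conv_lhs => rw [← b.linearCombination_repr a]
  rw [Finsupp.linearCombination_apply, Finsupp.sum, Finset.mul_sum]
  apply Finset.sum_congr rfl
  intro i _
  show ((b.repr a) i : A) * b i = x ^ (p - 1) * (c i • b i)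
  rw [hc i, smul_mul_assoc, mul_smul_comm]

end Aux

/-- Every endomorphism of `M = A·x^(p-1)` factoring through a projective module
is zero; in particular the stable endomorphism algebra of `M` is `End_A(M)`. -/
theorem stmt3 {k A : Type} (p : ℕ) [Fact p.Prime] [Field k] [CharP k p]
    [Ring A] [Algebra k A] [FiniteDimensional k A]
    (x : A) (hx : ∀ a : A, a * x = x * a)
    (hxp : x ^ p = 0) (hxp1 : x ^ (p - 1) ≠ 0)
    (hfree : Module.Free (kGen k x) A)
    (M : Submodule A A) (hM : M = Submodule.span A {x ^ (p - 1)})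
    (φ : M →ₗ[A] M) (hφ : FactorsThroughProjective φ) :
    φ = 0 := by
  have hp : p.Prime := Fact.out
  have hp2 : 2 ≤ p := hp.two_le
  obtain ⟨Q, f, g, hQ, hgf⟩ := hφ
  have hmem : x ^ (p - 1) ∈ M := by
    rw [hM]; exact Submodule.mem_span_singleton_self _
  set m₀ : M := ⟨x ^ (p - 1), hmem⟩ with hm₀
  have hxm : x • m₀ = 0 := by
    apply Subtype.ext
    show x • (x ^ (p - 1)) = (0 : A)
    rw [smul_eq_mul, ← pow_succ']
    rw [show p - 1 + 1 = p by omega, hxp]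
  have hq0 : x • f m₀ = 0 := by rw [← map_smul, hxm, map_zero]
  obtain ⟨s, hs⟩ := Module.projective_def.mp hQ
  set v := s (f m₀) with hv
  have hvz : ∀ q, x * v q = 0 := by
    intro q
    have h1 : x • v = 0 := by rw [hv, ← map_smul, hq0, map_zero]
    have h2 := congrArg (fun g : _ →₀ A => g q) h1
    simpa [Finsupp.smul_apply, smul_eq_mul] using h2
  have hw : ∀ q, ∃ w : A, v q = x ^ (p - 1) * w :=
    fun q => aux_ann p hp2 x hx hxp hxp1 hfree (v q) (hvz q)
  choose w hw using hw
  have hfm : f m₀ = x ^ (p - 1) • (∑ q ∈ v.support, w q • q) := by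
    conv_lhs => rw [← hs (f m₀), ← hv]
    rw [Finsupp.linearCombination_apply, Finsupp.sum, Finset.smul_sum]
    apply Finset.sum_congr rfl
    intro q _
    show v q • q = x ^ (p - 1) • w q • q
    rw [hw q, mul_smul]
  have hsq : x ^ (p - 1) * x ^ (p - 1) = 0 := by
    rw [← pow_add, show p - 1 + (p - 1) = p + (p - 2) by omega, pow_add, hxp, zero_mul]
  have hφ0 : φ m₀ = 0 := by
    rw [← hgf]
    show g (f m₀) = 0
    rw [hfm, map_smul]
    set u := g (∑ q ∈ v.support, w q • q) with hu
    have hu2 : (u : A) ∈ Submodule.span A {x ^ (p - 1)} := by rw [← hM]; exact u.2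
    obtain ⟨c, hc⟩ := Submodule.mem_span_singleton.mp hu2
    apply Subtype.ext
    show x ^ (p - 1) • (u : A) = (0 : A)
    rw [← hc, smul_eq_mul, smul_eq_mul]
    have hcomm : x ^ (p - 1) * c = c * x ^ (p - 1) :=
      ((Commute.pow_left (show Commute x c from (hx c).symm) (p - 1))).eq
    rw [← mul_assoc, hcomm, mul_assoc, hsq, mul_zero]
  apply LinearMap.ext
  intro z
  have hz2 : (z : A) ∈ Submodule.span A {x ^ (p - 1)} := by rw [← hM]; exact z.2
  obtain ⟨a, ha⟩ := Submodule.mem_span_singleton.mp hz2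
  have hz : z = a • m₀ := by
    apply Subtype.ext
    show (z : A) = a • (x ^ (p - 1))
    rw [← ha]
  rw [hz, map_smul, hφ0, smul_zero, LinearMap.zero_apply]
end

section
/- Let n be a positive integer. There is a short exact sequence of kV₄-modules 0 → M_n → (kV₄)^n → M_n → 0; that is, there exist an injective kV₄-module homomorphism ι : M_n → (kV₄)^n and a surjective kV₄-module homomorphism π : (kV₄)^n → M_n with range ι = ker π. In particular Ω(M_n) ≅ M_n. -/
/-- The Klein four group. -/
abbrev V4 : Type := Multiplicative (ZMod 2 × ZMod 2)

/-- The first generator `s` of the Klein four group. -/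
def sV4 : V4 := Multiplicative.ofAdd (1, 0)

/-- The second generator `t` of the Klein four group. -/
def tV4 : V4 := Multiplicative.ofAdd (0, 1)

/-- `B` is a `k`-basis `a_1,…,a_n,b_1,…,b_n` of the `kV₄`-module `M` on which
`x = s - 1` and `y = t - 1` act by `x·a_i = b_i`, `y·a_i = b_{i+1}` (`i < n`),
`y·a_n = 0`, `x·b_i = y·b_i = 0`; i.e. `M` is the module `M_n`. -/
def IsKleinModuleBasis (k : Type) [Field k] (n : ℕ) (M : Type) [AddCommGroup M]
    [Module k M] [Module (MonoidAlgebra k V4) M]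
    [IsScalarTower k (MonoidAlgebra k V4) M]
    (B : Module.Basis (Fin n ⊕ Fin n) k M) : Prop :=
  (∀ i : Fin n, (MonoidAlgebra.of k V4 sV4 - 1) • B (Sum.inl i) = B (Sum.inr i)) ∧
  (∀ (i : Fin n) (h : (i : ℕ) + 1 < n),
      (MonoidAlgebra.of k V4 tV4 - 1) • B (Sum.inl i) = B (Sum.inr ⟨(i : ℕ) + 1, h⟩)) ∧
  (∀ i : Fin n, (i : ℕ) + 1 = n → (MonoidAlgebra.of k V4 tV4 - 1) • B (Sum.inl i) = 0) ∧
  (∀ i : Fin n, (MonoidAlgebra.of k V4 sV4 - 1) • B (Sum.inr i) = 0) ∧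
  (∀ i : Fin n, (MonoidAlgebra.of k V4 tV4 - 1) • B (Sum.inr i) = 0)

/-!
Let `e_1, …, e_n` be the standard generators of `(kV₄)^n` and put `e_{n+1} = 0`. The map
`π : e_i ↦ a_i` is onto because `b_i = x a_i`. Since `x² = y² = 0` in characteristic 2, the
assignment `a_i ↦ y e_i + x e_{i+1}`, `b_i ↦ x y e_i` is `kV₄`-linear, and `π ∘ ι = 0` because
`y a_i = b_{i+1} = x a_{i+1}`. Reading off the `y`- and `x y`-coordinates of each component is a
`k`-linear left inverse of `ι`, so `ι` is injective, and exactness follows from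
`dim (kV₄)^n = 4n = 2n + 2n`.
-/

open Module MonoidAlgebra

lemma sub_one_mul_self_eq_zero_of_mul_self_eq_one {R : Type*} [Ring R] [CharP R 2] {u : R}
    (hu : u * u = 1) : (u - 1) * (u - 1) = 0 := by
  calc (u - 1) * (u - 1) = 2 * (1 - u) := by rw [sub_mul, mul_sub, mul_sub, hu]; noncomm_ring
    _ = 0 := by rw [CharTwo.two_eq_zero, zero_mul]

lemma map_add_one_smul {A M N F : Type*} [Semiring A] [AddCommMonoid M] [Module A M]
    [AddCommMonoid N] [Module A N] [FunLike F M N] [AddHomClass F M N] {f : F} {c : A}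
    (h : ∀ m, f (c • m) = c • f m) (m : M) : f ((c + 1) • m) = (c + 1) • f m := by
  rw [add_smul, add_smul, one_smul, one_smul, map_add, h]

lemma add_self_eq_zero_of_charP_two {R M : Type*} [Ring R] [CharP R 2] [AddCommGroup M]
    [Module R M] (m : M) : m + m = 0 := by
  rw [← two_smul R, CharTwo.two_eq_zero, zero_smul]

lemma map_smul_of_basis {ι R A M N : Type*} [CommSemiring R] [Semiring A] [Algebra R A]
    [AddCommMonoid M] [Module R M] [Module A M] [IsScalarTower R A M]
    [AddCommMonoid N] [Module R N] [Module A N] [IsScalarTower R A N]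
    (b : Basis ι R M) (f : M →ₗ[R] N) (c : A) (h : ∀ i, f (c • b i) = c • f (b i)) (m : M) :
    f (c • m) = c • f m :=
  LinearMap.congr_fun (b.ext (f₁ := f ∘ₗ DistribSMul.toLinearMap R M c)
    (f₂ := DistribSMul.toLinearMap R N c ∘ₗ f) h) m

lemma surjective_of_basis_mem_range {ι R A M N : Type*} [CommSemiring R] [Semiring A]
    [Algebra R A] [AddCommMonoid M] [Module R M] [Module A M] [IsScalarTower R A M]
    [AddCommMonoid N] [Module A N] (b : Basis ι R M) (f : N →ₗ[A] M)
    (h : ∀ i, b i ∈ LinearMap.range f) : Function.Surjective f := by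
  rw [← LinearMap.range_eq_top, eq_top_iff]
  intro m _
  have hspan : Submodule.span R (Set.range b) ≤ (LinearMap.range f).restrictScalars R :=
    (Submodule.span_le_restrictScalars R A _).trans
      (Submodule.restrictScalars_mono R (Submodule.span_le.2 (Set.range_subset_iff.2 h)))
  exact hspan (b.span_eq ▸ Submodule.mem_top)

lemma range_eq_ker_of_finrank_eq {R A M N P : Type*} [Field R] [Ring A] [Algebra R A]
    [AddCommGroup M] [Module R M] [Module A M] [IsScalarTower R A M]
    [AddCommGroup N] [Module R N] [Module A N] [IsScalarTower R A N] [FiniteDimensional R N]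
    [AddCommGroup P] [Module R P] [Module A P] [IsScalarTower R A P]
    {f : M →ₗ[A] N} {g : N →ₗ[A] P} (hf : Function.Injective f) (hg : Function.Surjective g)
    (hgf : g ∘ₗ f = 0) (hdim : finrank R N = finrank R M + finrank R P) :
    LinearMap.range f = LinearMap.ker g := by
  have hle : LinearMap.range f ≤ LinearMap.ker g := LinearMap.range_le_ker_iff.2 hgf
  have hrange : finrank R (LinearMap.range (f.restrictScalars R)) = finrank R M :=
    LinearMap.finrank_range_of_inj hf
  have hker := LinearMap.finrank_range_add_finrank_ker (g.restrictScalars R)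
  rw [LinearMap.range_eq_top.2 (show Function.Surjective (g.restrictScalars R) from hg),
    finrank_top] at hker
  refine Submodule.restrictScalars_injective R _ _ <|
    Submodule.eq_of_le_of_finrank_eq (Submodule.restrictScalars_mono R hle) ?_
  change finrank R (LinearMap.range (f.restrictScalars R)) =
    finrank R (LinearMap.ker (g.restrictScalars R))
  omega

section ExtendByZero

variable {X : Type*} [Zero X] {n : ℕ}

def extendByZero (v : Fin n → X) (m : ℕ) : X :=
  if h : m < n then v ⟨m, h⟩ else 0

@[simp]
lemma extendByZero_zero (m : ℕ) : extendByZero (fun _ : Fin n => (0 : X)) m = 0 := by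
  unfold extendByZero
  split_ifs <;> rfl

lemma smul_extendByZero {S : Type*} [SMulZeroClass S X] (c : S) (v : Fin n → X) (m : ℕ) :
    c • extendByZero v m = extendByZero (fun i => c • v i) m := by
  unfold extendByZero
  split_ifs <;> simp

lemma map_extendByZero {F Y : Type*} [Zero Y] [FunLike F X Y] [ZeroHomClass F X Y] (f : F)
    (v : Fin n → X) (m : ℕ) : f (extendByZero v m) = extendByZero (fun i => f (v i)) m := by
  unfold extendByZero
  split_ifs <;> simp

end ExtendByZero

section Klein

variable (k : Type) [Field k]

noncomputable abbrev xV4 : MonoidAlgebra k V4 := of k V4 sV4 - 1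

noncomputable abbrev yV4 : MonoidAlgebra k V4 := of k V4 tV4 - 1

variable {k}

lemma V4_cases (g : V4) : g = 1 ∨ g = sV4 ∨ g = tV4 ∨ g = sV4 * tV4 := by
  revert g; decide

lemma xV4_mul_yV4 :
    xV4 k * yV4 k = of k V4 (sV4 * tV4) - of k V4 sV4 - of k V4 tV4 + of k V4 1 := by
  rw [map_mul, map_one]; ring

section V4Linear

variable {M N : Type*} [AddCommGroup M] [Module k M] [Module (MonoidAlgebra k V4) M]
  [IsScalarTower k (MonoidAlgebra k V4) M] [AddCommGroup N] [Module k N]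
  [Module (MonoidAlgebra k V4) N] [IsScalarTower k (MonoidAlgebra k V4) N]

noncomputable def linearOfCommV4 (f : M →ₗ[k] N) (hx : ∀ m, f (xV4 k • m) = xV4 k • f m)
    (hy : ∀ m, f (yV4 k • m) = yV4 k • f m) : M →ₗ[MonoidAlgebra k V4] N :=
  equivariantOfLinearOfComm f fun g m => by
    have hs := map_add_one_smul hx
    have ht := map_add_one_smul hy
    rw [sub_add_cancel] at hs ht
    rw [← of_apply]
    rcases V4_cases g with rfl | rfl | rfl | rfl
    · rw [map_one, one_smul, one_smul]
    · exact hs m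
    · exact ht m
    · rw [map_mul, mul_smul, mul_smul, hs, ht]

end V4Linear

section coordV4

variable {M : Type*} [AddCommGroup M] [Module k M]

/-- The `k`-linear map `kV₄ → M` sending the basis `1, x, y, x y` to `0, 0, a, b`; on group
elements it is given by `t = 1 + y` and `s t = 1 + x + y + x y`. -/
noncomputable def coordV4 (a b : M) : MonoidAlgebra k V4 →ₗ[k] M :=
  (MonoidAlgebra.basis V4 k).constr k fun g =>
    if g = tV4 then a else if g = sV4 * tV4 then a + b else 0

lemma coordV4_of (a b : M) (g : V4) :
    coordV4 a b (of k V4 g) = if g = tV4 then a else if g = sV4 * tV4 then a + b else 0 := by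
  rw [of_apply, ← MonoidAlgebra.basis_apply, coordV4, Basis.constr_basis]

lemma coordV4_xV4 (a b : M) : coordV4 a b (xV4 k) = 0 := by
  rw [xV4, ← map_one (of k V4), map_sub, coordV4_of, coordV4_of]
  simp +decide

lemma coordV4_yV4 (a b : M) : coordV4 a b (yV4 k) = a := by
  rw [yV4, ← map_one (of k V4), map_sub, coordV4_of, coordV4_of]
  simp +decide

lemma coordV4_xV4_mul_yV4 (a b : M) : coordV4 a b (xV4 k * yV4 k) = b := by
  rw [xV4_mul_yV4, map_add, map_sub, map_sub, coordV4_of, coordV4_of, coordV4_of, coordV4_of]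
  simp +decide

end coordV4

section FreeModule

variable (k) (n : ℕ)

/-- The images of `a_i` and `b_i` in `(kV₄)^n`: `y e_i + x e_{i+1}` (where `e_{i+1} = 0` for the
last index `i`) and `x y e_i`. -/
noncomputable def omegaA (i : Fin n) : Fin n → MonoidAlgebra k V4 :=
  Pi.single i (yV4 k) + extendByZero (fun j => Pi.single j (xV4 k)) (i + 1)

noncomputable def omegaB (i : Fin n) : Fin n → MonoidAlgebra k V4 :=
  Pi.single i (xV4 k * yV4 k)

noncomputable def omegaFamily : Fin n ⊕ Fin n → Fin n → MonoidAlgebra k V4 :=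
  Sum.elim (omegaA k n) (omegaB k n)

variable {k n}

@[simp]
lemma omegaFamily_inl (i : Fin n) : omegaFamily k n (.inl i) = omegaA k n i := rfl

@[simp]
lemma omegaFamily_inr (i : Fin n) : omegaFamily k n (.inr i) = omegaB k n i := rfl

lemma smul_piSingle (c d : MonoidAlgebra k V4) (i : Fin n) :
    c • Pi.single i d = Pi.single i (c * d) :=
  (Pi.single_smul' i c d).symm

end FreeModule

section KleinModule

variable {n : ℕ} {M : Type} [AddCommGroup M] [Module k M] {B : Basis (Fin n ⊕ Fin n) k M}

variable (B) in
noncomputable def kleinRetraction : (Fin n → MonoidAlgebra k V4) →ₗ[k] M :=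
  LinearMap.lsum k (fun _ => MonoidAlgebra k V4) k fun i => coordV4 (B (.inl i)) (B (.inr i))

lemma kleinRetraction_single (i : Fin n) (c : MonoidAlgebra k V4) :
    kleinRetraction B (Pi.single i c) = coordV4 (B (.inl i)) (B (.inr i)) c :=
  LinearMap.lsum_piSingle _ _ _ _ _ _

lemma kleinRetraction_constr_omegaFamily (m : M) :
    kleinRetraction B (B.constr k (omegaFamily k n) m) = m := by
  refine LinearMap.congr_fun (B.ext (f₁ := kleinRetraction B ∘ₗ B.constr k (omegaFamily k n))
    (f₂ := LinearMap.id) fun j => ?_) m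
  rcases j with i | i
  · simp [omegaA, map_extendByZero, kleinRetraction_single, coordV4_yV4, coordV4_xV4]
  · simp [omegaB, kleinRetraction_single, coordV4_xV4_mul_yV4]

variable [Module (MonoidAlgebra k V4) M]

variable (B) in
noncomputable def kleinProjection : (Fin n → MonoidAlgebra k V4) →ₗ[MonoidAlgebra k V4] M :=
  Fintype.linearCombination (MonoidAlgebra k V4) fun i => B (.inl i)

lemma kleinProjection_single (i : Fin n) (c : MonoidAlgebra k V4) :
    kleinProjection B (Pi.single i c) = c • B (.inl i) :=
  Fintype.linearCombination_apply_single _ _ _ _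

variable [IsScalarTower k (MonoidAlgebra k V4) M]

namespace IsKleinModuleBasis

lemma xV4_smul_inl (hB : IsKleinModuleBasis k n M B) (i : Fin n) :
    xV4 k • B (.inl i) = B (.inr i) :=
  hB.1 i

lemma yV4_smul_inl (hB : IsKleinModuleBasis k n M B) (i : Fin n) :
    yV4 k • B (.inl i) = extendByZero (fun j => B (.inr j)) (i + 1) := by
  unfold extendByZero
  split_ifs with h
  · exact hB.2.1 i h
  · exact hB.2.2.1 i (by omega)

lemma xV4_smul_inr (hB : IsKleinModuleBasis k n M B) (i : Fin n) : xV4 k • B (.inr i) = 0 :=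
  hB.2.2.2.1 i

lemma yV4_smul_inr (hB : IsKleinModuleBasis k n M B) (i : Fin n) : yV4 k • B (.inr i) = 0 :=
  hB.2.2.2.2 i

lemma kleinProjection_surjective (hB : IsKleinModuleBasis k n M B) :
    Function.Surjective (kleinProjection B) := by
  refine surjective_of_basis_mem_range B _ fun j => ?_
  rcases j with i | i
  · exact ⟨Pi.single i 1, by rw [kleinProjection_single, one_smul]⟩
  · exact ⟨Pi.single i (xV4 k), by rw [kleinProjection_single, hB.xV4_smul_inl]⟩

end IsKleinModuleBasis

section CharTwo

variable [CharP k 2]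

instance : CharP (MonoidAlgebra k V4) 2 := charP_of_injective_algebraMap' k 2

lemma xV4_mul_self : xV4 k * xV4 k = 0 :=
  sub_one_mul_self_eq_zero_of_mul_self_eq_one (by rw [← map_mul]; rfl)

lemma yV4_mul_self : yV4 k * yV4 k = 0 :=
  sub_one_mul_self_eq_zero_of_mul_self_eq_one (by rw [← map_mul]; rfl)

lemma xV4_smul_omegaA (i : Fin n) : xV4 k • omegaA k n i = omegaB k n i := by
  simp [omegaA, omegaB, smul_extendByZero, smul_piSingle, xV4_mul_self]

lemma yV4_smul_omegaA (i : Fin n) :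
    yV4 k • omegaA k n i = extendByZero (omegaB k n) (i + 1) := by
  simp [omegaA, smul_extendByZero, smul_piSingle, yV4_mul_self, mul_comm (yV4 k)]
  rfl

lemma xV4_smul_omegaB (i : Fin n) : xV4 k • omegaB k n i = 0 := by
  simp [omegaB, smul_piSingle, ← mul_assoc, xV4_mul_self]

lemma yV4_smul_omegaB (i : Fin n) : yV4 k • omegaB k n i = 0 := by
  simp [omegaB, smul_piSingle, mul_left_comm, yV4_mul_self]

namespace IsKleinModuleBasis

lemma constr_omegaFamily_xV4_smul (hB : IsKleinModuleBasis k n M B) (m : M) :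
    B.constr k (omegaFamily k n) (xV4 k • m) = xV4 k • B.constr k (omegaFamily k n) m := by
  refine map_smul_of_basis B _ _ (fun j => ?_) m
  rcases j with i | i
  · rw [hB.xV4_smul_inl, Basis.constr_basis, Basis.constr_basis, omegaFamily_inl, omegaFamily_inr,
      xV4_smul_omegaA]
  · rw [hB.xV4_smul_inr, map_zero, Basis.constr_basis, omegaFamily_inr, xV4_smul_omegaB]

lemma constr_omegaFamily_yV4_smul (hB : IsKleinModuleBasis k n M B) (m : M) :
    B.constr k (omegaFamily k n) (yV4 k • m) = yV4 k • B.constr k (omegaFamily k n) m := by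
  refine map_smul_of_basis B _ _ (fun j => ?_) m
  rcases j with i | i
  · rw [hB.yV4_smul_inl, map_extendByZero, Basis.constr_basis, omegaFamily_inl, yV4_smul_omegaA]
    simp only [Basis.constr_basis, omegaFamily_inr]
  · rw [hB.yV4_smul_inr, map_zero, Basis.constr_basis, omegaFamily_inr, yV4_smul_omegaB]

end IsKleinModuleBasis

noncomputable def kleinInclusion (hB : IsKleinModuleBasis k n M B) :
    M →ₗ[MonoidAlgebra k V4] (Fin n → MonoidAlgebra k V4) :=
  linearOfCommV4 (B.constr k (omegaFamily k n)) hB.constr_omegaFamily_xV4_smul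
    hB.constr_omegaFamily_yV4_smul

namespace IsKleinModuleBasis

lemma kleinInclusion_basis (hB : IsKleinModuleBasis k n M B) (j : Fin n ⊕ Fin n) :
    kleinInclusion hB (B j) = omegaFamily k n j :=
  B.constr_basis k _ j

lemma kleinInclusion_injective (hB : IsKleinModuleBasis k n M B) :
    Function.Injective (kleinInclusion hB) :=
  Function.LeftInverse.injective (g := kleinRetraction B) kleinRetraction_constr_omegaFamily

lemma kleinProjection_omegaA (hB : IsKleinModuleBasis k n M B) (i : Fin n) :
    kleinProjection B (omegaA k n i) = 0 := by
  rw [omegaA, map_add, map_extendByZero, kleinProjection_single, hB.yV4_smul_inl]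
  simp only [kleinProjection_single, hB.xV4_smul_inl]
  exact add_self_eq_zero_of_charP_two (R := k) _

lemma kleinProjection_comp_kleinInclusion (hB : IsKleinModuleBasis k n M B) :
    kleinProjection B ∘ₗ kleinInclusion hB = 0 := by
  refine LinearMap.restrictScalars_injective k (B.ext fun j => ?_)
  change kleinProjection B (kleinInclusion hB (B j)) = 0
  rcases j with i | i
  · rw [hB.kleinInclusion_basis, omegaFamily_inl, hB.kleinProjection_omegaA]
  · rw [hB.kleinInclusion_basis, omegaFamily_inr, ← xV4_smul_omegaA, map_smul,
      hB.kleinProjection_omegaA, smul_zero]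

end IsKleinModuleBasis

end CharTwo

end KleinModule

end Klein

theorem stmt7_general (k : Type) [Field k] [CharP k 2]
    (n : ℕ)
    (M : Type) [AddCommGroup M] [Module k M] [Module (MonoidAlgebra k V4) M]
    [IsScalarTower k (MonoidAlgebra k V4) M]
    (B : Module.Basis (Fin n ⊕ Fin n) k M) (hB : IsKleinModuleBasis k n M B) :
    ∃ (ι : M →ₗ[MonoidAlgebra k V4] (Fin n → MonoidAlgebra k V4))
      (π : (Fin n → MonoidAlgebra k V4) →ₗ[MonoidAlgebra k V4] M),
      Function.Injective ι ∧ Function.Surjective π ∧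
        LinearMap.range ι = LinearMap.ker π := by
  have hdim : finrank k (Fin n → MonoidAlgebra k V4) = finrank k M + finrank k M := by
    rw [finrank_pi_fintype, finrank_eq_card_basis (MonoidAlgebra.basis V4 k),
      finrank_eq_card_basis B, Finset.sum_const, Finset.card_univ, Fintype.card_sum,
      Fintype.card_fin, smul_eq_mul, show Fintype.card V4 = 4 from rfl]
    ring
  exact ⟨kleinInclusion hB, kleinProjection B, hB.kleinInclusion_injective,
    hB.kleinProjection_surjective, range_eq_ker_of_finrank_eq hB.kleinInclusion_injective
      hB.kleinProjection_surjective hB.kleinProjection_comp_kleinInclusion hdim⟩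

/-- There is a short exact sequence `0 → M_n → (kV₄)^n → M_n → 0`;
in particular `Ω(M_n) ≅ M_n`. -/
theorem stmt7 (k : Type) [Field k] [IsAlgClosed k] [CharP k 2]
    (n : ℕ) (hn : 0 < n)
    (M : Type) [AddCommGroup M] [Module k M] [Module (MonoidAlgebra k V4) M]
    [IsScalarTower k (MonoidAlgebra k V4) M]
    (B : Module.Basis (Fin n ⊕ Fin n) k M) (hB : IsKleinModuleBasis k n M B) :
    ∃ (ι : M →ₗ[MonoidAlgebra k V4] (Fin n → MonoidAlgebra k V4))
      (π : (Fin n → MonoidAlgebra k V4) →ₗ[MonoidAlgebra k V4] M),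
      Function.Injective ι ∧ Function.Surjective π ∧
        LinearMap.range ι = LinearMap.ker π :=
  stmt7_general k n M B hB
end

section
/- Let n be a positive integer. For 1 ≤ i ≤ n let φ^n_i denote the kV₄-module endomorphism of M_n sending a_i to b_1 and all other basis elements a_j (j ≠ i) and b_j to zero. If scalars α_1, …, α_n ∈ k are such that the endomorphism ∑_{i=1}^n α_i φ^n_i factors through a projective kV₄-module, then α_i = 0 for all i; that is, the classes of φ^n_1, …, φ^n_n are linearly independent in the stable endomorphism algebra of M_n. -/
universe u v w

/-!
A map that factors through a projective `k[G]`-module is a relative trace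
`∑ g, g⁻¹ • ψ (g • ·)` of a `k`-linear map `ψ`: on a free module the identity is the relative trace
of the projection onto the coefficient of `1`. For `V₄` in characteristic `2`, and on modules
killed by `x y` such as `M_n`, the relative trace of `ψ` is `m ↦ x ψ(y m) + y ψ(x m)`; it sends
`a_j` to `x ψ(b_{j+1}) + y ψ(b_j)`. Hence the functional
`θ ↦ ∑_l (coefficient of b_l in θ(a_{i+l}))` is twice a sum, hence `0`, on relative traces,
whereas it takes the value `α_i` on `∑ α_j φ_j`.
-/

open MonoidAlgebra

noncomputable def coeffOneProj (k G : Type*) [CommSemiring k] [Monoid G] : k[G] →ₗ[k] k[G] :=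
  lsingle 1 ∘ₗ Finsupp.lapply 1 ∘ₗ (coeffLinearEquiv k).toLinearMap

lemma coeffOneProj_apply {k G : Type*} [CommSemiring k] [Monoid G] (a : k[G]) :
    coeffOneProj k G a = single 1 (a.coeff 1) :=
  rfl

section RelativeTrace

variable {k G : Type*} [CommRing k] [Group G] [Fintype G]

lemma sumOfConjugates_coeffOneProj : (coeffOneProj k G).sumOfConjugates G = LinearMap.id := by
  refine LinearMap.ext fun a => ?_
  have hcoeff : ∀ g : G, (single g (1 : k) * a).coeff 1 = a.coeff g⁻¹ := fun g => by
    rw [← mul_inv_cancel g, coeff_single_mul_mul, one_mul]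
  simp only [LinearMap.sumOfConjugates_apply, LinearMap.conjugate_apply, smul_eq_mul,
    LinearMap.id_apply, coeffOneProj_apply, single_mul_single, mul_one, hcoeff]
  rw [← Equiv.sum_comp (Equiv.inv G)]
  ext g
  simp [coeff_sum]

lemma sumOfConjugates_mapRange_coeffOneProj (Q : Type*) :
    (Finsupp.mapRange.linearMap (α := Q) (coeffOneProj k G)).sumOfConjugates G =
      LinearMap.id := by
  refine Finsupp.lhom_ext fun q a => ?_
  have h := LinearMap.congr_fun (sumOfConjugates_coeffOneProj (k := k) (G := G)) a
  simp only [LinearMap.sumOfConjugates_apply, LinearMap.conjugate_apply, LinearMap.id_apply] at h ⊢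
  simp only [Finsupp.smul_single, Finsupp.mapRange.linearMap_apply, Finsupp.mapRange_single,
    ← Finsupp.single_finsetSum, h]

theorem FactorsThroughProjective.exists_sumOfConjugates_eq {M N : Type*} [AddCommGroup M]
    [Module k M] [Module k[G] M] [IsScalarTower k k[G] M] [AddCommGroup N] [Module k N]
    [Module k[G] N] [IsScalarTower k k[G] N] {Φ : M →ₗ[k[G]] N}
    (hΦ : FactorsThroughProjective Φ) :
    ∃ ψ : M →ₗ[k] N, Φ.restrictScalars k = ψ.sumOfConjugates G := by
  obtain ⟨Q, f, g, hQ, rfl⟩ := hΦ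
  obtain ⟨s, hs⟩ := Module.projective_def'.mp hQ
  refine ⟨(g ∘ₗ Finsupp.linearCombination k[G] id).restrictScalars k ∘ₗ
    Finsupp.mapRange.linearMap (coeffOneProj k G) ∘ₗ (s ∘ₗ f).restrictScalars k, ?_⟩
  refine LinearMap.ext fun m => ?_
  have htrace := LinearMap.congr_fun (sumOfConjugates_mapRange_coeffOneProj (k := k) Q) (s (f m))
  have hsection := LinearMap.congr_fun hs (f m)
  have hequiv : ∀ x : G, s (f (single x (1 : k) • m)) = single x (1 : k) • s (f m) := fun x => by
    rw [map_smul, map_smul]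
  simp only [LinearMap.sumOfConjugates_apply, LinearMap.conjugate_apply, LinearMap.comp_apply,
    LinearMap.restrictScalars_apply, LinearMap.id_apply, hequiv] at htrace hsection ⊢
  conv_lhs => rw [← hsection, ← htrace]
  simp only [map_sum, map_smul]

end RelativeTrace

theorem sumOfConjugates_V4_apply {k : Type*} [CommRing k] [CharP k 2] {M N : Type*}
    [AddCommGroup M] [Module k M] [Module k[V4] M] [IsScalarTower k k[V4] M]
    [AddCommGroup N] [Module k N] [Module k[V4] N] [IsScalarTower k k[V4] N]
    (ψ : M →ₗ[k] N) {m : M} (hm : (of k V4 sV4 - 1) • (of k V4 tV4 - 1) • m = 0)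
    (hN : ∀ v : N, (of k V4 sV4 - 1) • (of k V4 tV4 - 1) • v = 0) :
    ψ.sumOfConjugates V4 m =
      (of k V4 sV4 - 1) • ψ ((of k V4 tV4 - 1) • m) +
        (of k V4 tV4 - 1) • ψ ((of k V4 sV4 - 1) • m) := by
  set x := of k V4 sV4 - 1
  set y := of k V4 tV4 - 1
  have hs : single sV4 (1 : k) = x + 1 := by simp [x]
  have ht : single tV4 (1 : k) = y + 1 := by simp [y]
  have hst : single (sV4 * tV4) (1 : k) = (x + 1) * (y + 1) := by
    rw [← hs, ← ht, single_mul_single, mul_one]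
  have huniv : (Finset.univ : Finset V4) = {1, sV4, tV4, sV4 * tV4} := by decide
  have hinv : ∀ g : V4, g⁻¹ = g := by decide
  have h2 : (2 : k[V4]) = 0 := by
    have h := congrArg (algebraMap k k[V4]) (CharTwo.two_eq_zero (R := k))
    rwa [map_ofNat, map_zero] at h
  simp only [LinearMap.sumOfConjugates_apply, LinearMap.conjugate_apply, huniv, hinv]
  rw [Finset.sum_insert (by decide), Finset.sum_insert (by decide), Finset.sum_insert (by decide),
    Finset.sum_singleton, hs, ht, hst]
  simp only [← one_def, add_mul, mul_add, one_mul, mul_one, add_smul, mul_smul, one_smul,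
    smul_add, map_add, hm, hN, map_zero, smul_zero]
  clear_value x y
  -- all other terms of the expansion occur an even number of times
  linear_combination (norm := module) h2 • (2 • ψ m + ψ (x • m) + x • ψ (x • m) + x • ψ m +
    y • ψ (y • m) + ψ (y • m) + y • ψ m)

theorem Module.Basis.map_smul_eq_of_forall {k A M P ι : Type*} [CommRing k] [CommRing A]
    [Algebra k A] [AddCommGroup M] [Module k M] [Module A M] [IsScalarTower k A M]
    [AddCommGroup P] [Module k P] (b : Module.Basis ι k M) (a : A) {f g : M →ₗ[k] P}
    (h : ∀ i, f (a • b i) = g (b i)) (v : M) : f (a • v) = g v :=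
  LinearMap.congr_fun (b.ext (f₁ := f ∘ₗ (LinearMap.lsmul A M a).restrictScalars k) h) v

section PaddedBasis

variable {k : Type} [Field k] {n : ℕ} {M : Type} [AddCommGroup M] [Module k M]

-- `aVec B j`, `bVec B j` are the paper's `a_{j+1}`, `b_{j+1}`, extended by `0` for `j ≥ n`.
noncomputable def aVec (B : Module.Basis (Fin n ⊕ Fin n) k M) (j : ℕ) : M :=
  if h : j < n then B (.inl ⟨j, h⟩) else 0

noncomputable def bVec (B : Module.Basis (Fin n ⊕ Fin n) k M) (j : ℕ) : M :=
  if h : j < n then B (.inr ⟨j, h⟩) else 0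

noncomputable def aCoord (B : Module.Basis (Fin n ⊕ Fin n) k M) (j : ℕ) : M →ₗ[k] k :=
  if h : j < n then B.coord (.inl ⟨j, h⟩) else 0

noncomputable def bCoord (B : Module.Basis (Fin n ⊕ Fin n) k M) (j : ℕ) : M →ₗ[k] k :=
  if h : j < n then B.coord (.inr ⟨j, h⟩) else 0

variable {B : Module.Basis (Fin n ⊕ Fin n) k M}

@[simp] lemma aVec_fin (p : Fin n) : aVec B p = B (.inl p) := dif_pos p.isLt

@[simp] lemma bVec_fin (p : Fin n) : bVec B p = B (.inr p) := dif_pos p.isLt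

lemma bVec_of_le {j : ℕ} (h : n ≤ j) : bVec B j = 0 := dif_neg (by omega)

lemma aCoord_aVec (l j : ℕ) : aCoord B l (aVec B j) = if l = j ∧ j < n then 1 else 0 := by
  unfold aCoord aVec
  split_ifs <;> simp_all [Fin.ext_iff]

lemma bCoord_bVec (l j : ℕ) : bCoord B l (bVec B j) = if l = j ∧ j < n then 1 else 0 := by
  unfold bCoord bVec
  split_ifs <;> simp_all [Fin.ext_iff]

lemma aCoord_bVec (l j : ℕ) : aCoord B l (bVec B j) = 0 := by
  unfold aCoord bVec
  split_ifs <;> simp_all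

end PaddedBasis

section KleinModule

variable {k : Type} [Field k] {n : ℕ} {M : Type} [AddCommGroup M] [Module k M] [Module k[V4] M]
  [IsScalarTower k k[V4] M] {B : Module.Basis (Fin n ⊕ Fin n) k M}

lemma IsKleinModuleBasis.x_smul_aVec (hB : IsKleinModuleBasis k n M B) (j : ℕ) :
    (of k V4 sV4 - 1) • aVec B j = bVec B j := by
  unfold aVec bVec
  split_ifs
  · exact hB.1 _
  · exact smul_zero _

lemma IsKleinModuleBasis.y_smul_aVec (hB : IsKleinModuleBasis k n M B) (j : ℕ) :
    (of k V4 tV4 - 1) • aVec B j = bVec B (j + 1) := by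
  unfold aVec bVec
  split_ifs with hj hj'
  · exact hB.2.1 ⟨j, hj⟩ hj'
  · exact hB.2.2.1 ⟨j, hj⟩ (by simp only; omega)
  · omega
  · exact smul_zero _

lemma IsKleinModuleBasis.x_smul_bVec (hB : IsKleinModuleBasis k n M B) (j : ℕ) :
    (of k V4 sV4 - 1) • bVec B j = 0 := by
  unfold bVec
  split_ifs
  · exact hB.2.2.2.1 _
  · exact smul_zero _

lemma IsKleinModuleBasis.y_smul_bVec (hB : IsKleinModuleBasis k n M B) (j : ℕ) :
    (of k V4 tV4 - 1) • bVec B j = 0 := by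
  unfold bVec
  split_ifs
  · exact hB.2.2.2.2 _
  · exact smul_zero _

lemma IsKleinModuleBasis.xy_smul (hB : IsKleinModuleBasis k n M B) (v : M) :
    (of k V4 sV4 - 1) • (of k V4 tV4 - 1) • v = 0 := by
  rw [← mul_smul]
  refine B.map_smul_eq_of_forall (f := LinearMap.id) (g := 0) _ (fun i => ?_) v
  rcases i with p | p
  · rw [← aVec_fin, mul_smul, hB.y_smul_aVec, hB.x_smul_bVec, LinearMap.zero_apply, map_zero]
  · rw [← bVec_fin, mul_smul, hB.y_smul_bVec, smul_zero, LinearMap.zero_apply, map_zero]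

lemma IsKleinModuleBasis.bCoord_x_smul (hB : IsKleinModuleBasis k n M B) (j : ℕ) (v : M) :
    bCoord B j ((of k V4 sV4 - 1) • v) = aCoord B j v := by
  refine B.map_smul_eq_of_forall _ (fun i => ?_) v
  rcases i with p | p
  · rw [← aVec_fin, hB.x_smul_aVec, aCoord_aVec, bCoord_bVec]
  · rw [← bVec_fin, hB.x_smul_bVec, aCoord_bVec, map_zero]

lemma IsKleinModuleBasis.bCoord_succ_y_smul (hB : IsKleinModuleBasis k n M B) {j : ℕ}
    (hj : j + 1 < n) (v : M) : bCoord B (j + 1) ((of k V4 tV4 - 1) • v) = aCoord B j v := by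
  refine B.map_smul_eq_of_forall _ (fun i => ?_) v
  rcases i with p | p
  · rw [← aVec_fin, hB.y_smul_aVec, aCoord_aVec, bCoord_bVec]
    exact if_congr (by omega) rfl rfl
  · rw [← bVec_fin, hB.y_smul_bVec, aCoord_bVec, map_zero]

lemma IsKleinModuleBasis.bCoord_zero_y_smul (hB : IsKleinModuleBasis k n M B) (v : M) :
    bCoord B 0 ((of k V4 tV4 - 1) • v) = 0 := by
  refine B.map_smul_eq_of_forall (g := 0) _ (fun i => ?_) v
  rcases i with p | p
  · rw [← aVec_fin, hB.y_smul_aVec, bCoord_bVec, if_neg (by omega), LinearMap.zero_apply]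
  · rw [← bVec_fin, hB.y_smul_bVec, map_zero, LinearMap.zero_apply]

lemma IsKleinModuleBasis.sumOfConjugates_aVec [CharP k 2] (hB : IsKleinModuleBasis k n M B)
    (ψ : M →ₗ[k] M) (j : ℕ) :
    ψ.sumOfConjugates V4 (aVec B j) =
      (of k V4 sV4 - 1) • ψ (bVec B (j + 1)) + (of k V4 tV4 - 1) • ψ (bVec B j) := by
  rw [sumOfConjugates_V4_apply ψ (hB.xy_smul _) hB.xy_smul, hB.x_smul_aVec, hB.y_smul_aVec]

lemma IsKleinModuleBasis.sum_bCoord_x_smul_add_y_smul [CharP k 2] (hB : IsKleinModuleBasis k n M B)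
    (u : ℕ → M) (hu : u n = 0) :
    ∑ l ∈ Finset.range n,
      bCoord B l ((of k V4 sV4 - 1) • u (l + 1) + (of k V4 tV4 - 1) • u l) = 0 := by
  cases n with
  | zero => rfl
  | succ m =>
    simp only [map_add, Finset.sum_add_distrib, hB.bCoord_x_smul]
    rw [Finset.sum_range_succ, hu, map_zero, add_zero, Finset.sum_range_succ',
      hB.bCoord_zero_y_smul, add_zero]
    rw [Finset.sum_congr rfl fun l hl => hB.bCoord_succ_y_smul (by simp at hl; omega) (u (l + 1))]
    exact CharTwo.add_self_eq_zero _

end KleinModule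

lemma sum_bCoord_sum_smul_apply_aVec {k : Type} [Field k] {n : ℕ} (hn : 0 < n) {M : Type}
    [AddCommGroup M] [Module k M] [Module k[V4] M] [IsScalarTower k k[V4] M]
    {B : Module.Basis (Fin n ⊕ Fin n) k M} (φ : Fin n → (M →ₗ[k[V4]] M))
    (hφa : ∀ i j : Fin n, φ i (B (Sum.inl j)) = if j = i then B (Sum.inr ⟨0, hn⟩) else 0)
    (α : Fin n → k) (i : Fin n) :
    ∑ l ∈ Finset.range n, bCoord B l ((∑ i : Fin n, α i • φ i) (aVec B (i + l))) = α i := by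
  have hval : ∀ p : ℕ, (∑ i : Fin n, α i • φ i) (aVec B p) =
      (if h : p < n then α ⟨p, h⟩ else 0) • bVec B 0 := by
    intro p
    unfold aVec
    split_ifs with hp
    · simp [hφa, ← bVec_fin]
    · simp
  simp only [hval, map_smul, bCoord_bVec]
  rw [Finset.sum_eq_single 0 (fun l _ hl => by simp [hl]) (by simp [hn])]
  simp [hn]

theorem stmt10_general (k : Type) [Field k] [CharP k 2]
    (n : ℕ) (hn : 0 < n)
    (M : Type) [AddCommGroup M] [Module k M] [Module (MonoidAlgebra k V4) M]
    [IsScalarTower k (MonoidAlgebra k V4) M]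
    (B : Module.Basis (Fin n ⊕ Fin n) k M) (hB : IsKleinModuleBasis k n M B)
    (φ : Fin n → (M →ₗ[MonoidAlgebra k V4] M))
    (hφa : ∀ i j : Fin n, φ i (B (Sum.inl j)) = if j = i then B (Sum.inr ⟨0, hn⟩) else 0)
    (α : Fin n → k)
    (hfac : FactorsThroughProjective (∑ i : Fin n, α i • φ i)) :
    ∀ i : Fin n, α i = 0 := by
  intro i
  obtain ⟨ψ, hψ⟩ := hfac.exists_sumOfConjugates_eq
  have hΦ : ∀ j, (∑ i : Fin n, α i • φ i) (aVec B j) =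
      (of k V4 sV4 - 1) • ψ (bVec B (j + 1)) + (of k V4 tV4 - 1) • ψ (bVec B j) := fun j => by
    rw [← hB.sumOfConjugates_aVec, ← hψ, LinearMap.restrictScalars_apply]
  calc α i = ∑ l ∈ Finset.range n, bCoord B l ((∑ i : Fin n, α i • φ i) (aVec B (i + l))) :=
        (sum_bCoord_sum_smul_apply_aVec hn φ hφa α i).symm
    _ = 0 := by
      simp only [hΦ]
      refine hB.sum_bCoord_x_smul_add_y_smul (fun l => ψ (bVec B (i + l))) ?_
      rw [bVec_of_le (by omega), map_zero]

/-- If a `k`-linear combination of the endomorphisms `φ^n_i` of `M_n` (sending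
`a_i ↦ b_1` and all other basis vectors to `0`) factors through a projective
module, then all coefficients vanish: the classes of the `φ^n_i` are linearly
independent in the stable endomorphism algebra of `M_n`. -/
theorem stmt10 (k : Type) [Field k] [IsAlgClosed k] [CharP k 2]
    (n : ℕ) (hn : 0 < n)
    (M : Type) [AddCommGroup M] [Module k M] [Module (MonoidAlgebra k V4) M]
    [IsScalarTower k (MonoidAlgebra k V4) M]
    [SMulCommClass (MonoidAlgebra k V4) k M]
    (B : Module.Basis (Fin n ⊕ Fin n) k M) (hB : IsKleinModuleBasis k n M B)
    (φ : Fin n → (M →ₗ[MonoidAlgebra k V4] M))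
    (hφa : ∀ i j : Fin n, φ i (B (Sum.inl j)) = if j = i then B (Sum.inr ⟨0, hn⟩) else 0)
    (hφb : ∀ i j : Fin n, φ i (B (Sum.inr j)) = 0)
    (α : Fin n → k)
    (hfac : FactorsThroughProjective (∑ i : Fin n, α i • φ i)) :
    ∀ i : Fin n, α i = 0 :=
  stmt10_general k n hn M B hB φ hφa α hfac
end

section
/- Let k be a field of characteristic 2, let λ, μ ∈ k satisfy λ² + λμ + μ² ≠ 0, and set x = λ(s−1) + μ(t−1) in kQ₈. Then 1 + x is a unit of order 4 in kQ₈ (i.e. (1+x)⁴ = 1 and (1+x)² ≠ 1), and kQ₈ is projective as a left module over the k-subalgebra k⟨x⟩ generated by x. -/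
/-
In characteristic 2 we have `x = λ(s + 1) + μ(t + 1)` and `x² = (1 + z)(λ² + μ² + λμ·st)`,
where `1 + z` is central with `(1 + z)² = 0`; hence `x⁴ = 0` and `(1 + x)⁴ = 1 + x⁴ = 1`.

If `y ^ n = 0`, then `k⟨y⟩` is spanned by `1, y, …, y ^ (n - 1)`, and as soon as
`y ^ (n - 1) v₁, …, y ^ (n - 1) vᵣ` are linearly independent, so are all the `y ^ i vⱼ`;
when `dim A = n r` they form a `k`-basis of `A`, so `v₁, …, vᵣ` is a `k⟨y⟩`-basis of `A`.
For `kQ₈` take `v₁ = 1` and `v₂ = x' = (λ + μ)(s - 1) + λ(t - 1)`: then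
`x³ x' = (λ² + λμ + μ²)² · ∑ g`, while the coefficients `(λ + μ)³, λ³, μ³` of `x³` at
`1, s, t` are not all equal when `λ² + λμ + μ² ≠ 0`. In particular `x³ ≠ 0`, so
`(1 + x)² = 1 + x² ≠ 1`.
-/

/-- The quaternion group of order 8. -/
abbrev Q8 : Type := QuaternionGroup 2

/-- The generator `s` of `Q₈`, of order 4. -/
def sQ8 : Q8 := QuaternionGroup.a 1

/-- The generator `t` of `Q₈`, satisfying `t² = s²` and `t·s·t⁻¹ = s⁻¹`. -/
def tQ8 : Q8 := QuaternionGroup.xa 0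

/-- The unique central involution `z = s²` of `Q₈`. -/
def zQ8 : Q8 := sQ8 * sQ8

section AdjoinNilpotent

variable {k A : Type*} [CommRing k] [Ring A] [Algebra k A] {y : A} {n : ℕ}

theorem mem_span_pow_of_mem_adjoin (hy : y ^ n = 0) {r : A} (hr : r ∈ Algebra.adjoin k {y}) :
    r ∈ Submodule.span k (Set.range fun i : Fin n => y ^ (i : ℕ)) := by
  rw [← Subalgebra.mem_toSubmodule, Algebra.adjoin_eq_span, Submonoid.closure_singleton_eq] at hr
  refine Submodule.span_le.2 ?_ hr
  rintro _ ⟨m, rfl⟩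
  change y ^ m.toAdd ∈ _
  rcases lt_or_ge m.toAdd n with hm | hm
  · exact Submodule.subset_span ⟨⟨m.toAdd, hm⟩, rfl⟩
  · simp [pow_eq_zero_of_le hm hy]

theorem linearIndependent_pow_mul_of_pow_eq_zero (hy : y ^ n = 0) {ι : Type*} [Fintype ι]
    {v : ι → A} (hv : LinearIndependent k fun j => y ^ (n - 1) * v j) :
    LinearIndependent k fun p : Fin n × ι => y ^ (p.1 : ℕ) * v p.2 := by
  rw [Fintype.linearIndependent_iff] at hv ⊢
  intro c hc
  suffices ∀ i (hi : i < n) j, c (⟨i, hi⟩, j) = 0 from fun p => this p.1 p.1.2 p.2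
  intro i
  induction i using Nat.strong_induction_on with
  | _ i ih =>
  intro hi
  apply hv
  -- multiplying by `y ^ (n - 1 - i)` kills the terms of degree `> i`
  have hci := congrArg (y ^ (n - 1 - i) * ·) hc
  simp only [mul_zero, Finset.mul_sum, mul_smul_comm, ← mul_assoc, ← pow_add] at hci
  rw [Fintype.sum_prod_type, Finset.sum_eq_single ⟨i, hi⟩] at hci
  · simpa [show n - 1 - i + i = n - 1 by omega] using hci
  · intro i' _ hi'
    obtain h | h : (i' : ℕ) < i ∨ i < i' := Nat.lt_or_gt_of_ne fun h => hi' (Fin.ext h)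
    · simp [ih _ h]
    · simp [pow_eq_zero_of_le (show n ≤ n - 1 - i + i' by omega) hy]
  · simp

end AdjoinNilpotent

theorem Module.free_adjoin_of_pow_eq_zero {k A : Type*} [Field k] [Ring A] [Algebra k A]
    [FiniteDimensional k A] {y : A} {n : ℕ} (hy : y ^ n = 0) {ι : Type*} [Fintype ι]
    {v : ι → A} (hv : LinearIndependent k fun j => y ^ (n - 1) * v j)
    (hdim : Module.finrank k A = n * Fintype.card ι) :
    Module.Free (Algebra.adjoin k {y}) A := by
  have hw := linearIndependent_pow_mul_of_pow_eq_zero hy hv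
  have hspan := hw.span_eq_top_of_card_eq_finrank' (by simp [hdim])
  refine Module.Free.of_basis (Basis.mk (v := v) ?_ ?_)
  · rw [Fintype.linearIndependent_iff]
    intro g hg
    choose c hc using fun j =>
      (Submodule.mem_span_range_iff_exists_fun k).1 (mem_span_pow_of_mem_adjoin hy (g j).2)
    have hc0 := Fintype.linearIndependent_iff.1 hw (fun p => c p.2 p.1) ?_
    · intro j
      ext1
      simp [← hc j, fun i => hc0 (i, j)]
    · rw [Fintype.sum_prod_type_right]
      simpa [Subalgebra.smul_def, ← hc, Finset.sum_mul, smul_mul_assoc] using hg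
  · have hle : Submodule.span k (Set.range fun p : Fin n × ι => y ^ (p.1 : ℕ) * v p.2) ≤
        (Submodule.span (Algebra.adjoin k {y}) (Set.range v)).restrictScalars k := by
      rw [Submodule.span_le]
      rintro _ ⟨⟨i, j⟩, rfl⟩
      have hyi : y ^ (i : ℕ) ∈ Algebra.adjoin k {y} :=
        pow_mem (Algebra.self_mem_adjoin_singleton k y) _
      exact (Submodule.span _ (Set.range v)).smul_mem (⟨_, hyi⟩ : Algebra.adjoin k {y})
        (Submodule.subset_span (Set.mem_range_self j))
    exact fun m _ => hle (hspan ▸ Submodule.mem_top)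

section ShiftQ8

open MonoidAlgebra

variable {k : Type*} [CommRing k]

noncomputable def shiftQ8 (lam mu : k) : MonoidAlgebra k Q8 :=
  lam • (of k Q8 sQ8 - 1) + mu • (of k Q8 tQ8 - 1)

theorem shiftQ8_eq_sum_single (lam mu : k) :
    shiftQ8 lam mu = single 1 (-(lam + mu)) + single sQ8 lam + single tQ8 mu := by
  simp only [shiftQ8, of_apply, MonoidAlgebra.one_def, smul_sub, smul_single, smul_eq_mul, mul_one]
  rw [neg_add, single_add, single_neg, single_neg]
  abel

variable [CharP k 2]

theorem shiftQ8_sq (lam mu : k) : shiftQ8 lam mu ^ 2 =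
    single 1 (lam ^ 2 + mu ^ 2) + single zQ8 (lam ^ 2 + mu ^ 2) +
      single (sQ8 * tQ8) (lam * mu) + single (tQ8 * sQ8) (lam * mu) := by
  rw [shiftQ8_eq_sum_single, sq]
  simp only [add_mul, mul_add, single_mul_single]
  ext (i | i) <;> fin_cases i <;> simp +decide [Finsupp.single_apply, sQ8, tQ8, zQ8] <;>
    ring_nf <;> reduce_mod_char!

theorem shiftQ8_pow_four (lam mu : k) : shiftQ8 lam mu ^ 4 = 0 := by
  rw [show 4 = 2 * 2 from rfl, pow_mul, shiftQ8_sq, sq]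
  simp only [add_mul, mul_add, single_mul_single]
  ext (i | i) <;> fin_cases i <;> simp +decide [Finsupp.single_apply, sQ8, tQ8, zQ8] <;>
    ring_nf <;> reduce_mod_char!

theorem shiftQ8_pow_three (lam mu : k) : shiftQ8 lam mu ^ 3 =
    single 1 ((lam + mu) ^ 3) + single zQ8 ((lam + mu) ^ 3) +
      single sQ8 (lam ^ 3) + single (sQ8 * zQ8) (lam ^ 3) +
      single tQ8 (mu ^ 3) + single (tQ8 * zQ8) (mu ^ 3) +
      single (sQ8 * tQ8) (lam * mu * (lam + mu)) + single (tQ8 * sQ8) (lam * mu * (lam + mu)) := by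
  rw [pow_succ, shiftQ8_sq, shiftQ8_eq_sum_single]
  simp only [add_mul, mul_add, single_mul_single]
  ext (i | i) <;> fin_cases i <;> simp +decide [Finsupp.single_apply, sQ8, tQ8, zQ8] <;>
    ring_nf <;> reduce_mod_char!

set_option maxHeartbeats 800000 in
theorem coeff_shiftQ8_pow_three_mul (lam mu : k) (g : Q8) :
    (shiftQ8 lam mu ^ 3 * shiftQ8 (lam + mu) lam).coeff g = (lam ^ 2 + lam * mu + mu ^ 2) ^ 2 := by
  rw [shiftQ8_pow_three, shiftQ8_eq_sum_single]
  simp only [add_mul, mul_add, single_mul_single]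
  rcases g with i | i <;> fin_cases i <;> simp +decide [Finsupp.single_apply, sQ8, tQ8, zQ8] <;>
    ring_nf <;> reduce_mod_char!

end ShiftQ8

theorem linearIndependent_shiftQ8_pow_three {k : Type*} [Field k] [CharP k 2] (lam mu : k)
    (h : lam ^ 2 + lam * mu + mu ^ 2 ≠ 0) :
    LinearIndependent k ![shiftQ8 lam mu ^ 3, shiftQ8 lam mu ^ 3 * shiftQ8 (lam + mu) lam] := by
  rw [LinearIndependent.pair_iff]
  intro α β hαβ
  have e (g : Q8) :
      α * (shiftQ8 lam mu ^ 3).coeff g + β * (lam ^ 2 + lam * mu + mu ^ 2) ^ 2 = 0 := by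
    simpa [coeff_shiftQ8_pow_three_mul] using congrArg (·.coeff g) hαβ
  have e1 := e 1
  have es := e sQ8
  have et := e tQ8
  simp +decide [shiftQ8_pow_three, sQ8, tQ8, zQ8] at e1 es et
  have h2 : (2 : k) = 0 := CharTwo.two_eq_zero
  have hμ : α * mu = 0 := by
    have : α * mu * (lam ^ 2 + lam * mu + mu ^ 2) = 0 := by
      linear_combination e1 - es - α * lam * mu * (lam + mu) * h2
    simpa [h] using this
  have hdiff : α * (lam - mu) = 0 := by
    have : α * (lam - mu) * (lam ^ 2 + lam * mu + mu ^ 2) = 0 := by linear_combination es - et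
    simpa [h] using this
  have hα : α = 0 := by
    have : α * (lam ^ 2 + lam * mu + mu ^ 2) = 0 := by
      linear_combination lam * hdiff + (2 * lam + mu) * hμ
    simpa [h] using this
  exact ⟨hα, by simpa [hα, h] using e1⟩

/-- For `λ² + λμ + μ² ≠ 0`, the element `1 + x` with
`x = λ(s-1) + μ(t-1)` is a unit of order `4` in `kQ₈`, and `kQ₈` is projective
as a module over the subalgebra generated by `x`. -/
theorem stmt15 (k : Type) [Field k] [CharP k 2]
    (lam mu : k) (h : lam ^ 2 + lam * mu + mu ^ 2 ≠ 0)
    (x : MonoidAlgebra k Q8)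
    (hx : x = lam • (MonoidAlgebra.of k Q8 sQ8 - 1) +
        mu • (MonoidAlgebra.of k Q8 tQ8 - 1)) :
    IsUnit (1 + x) ∧ (1 + x) ^ 4 = 1 ∧ (1 + x) ^ 2 ≠ 1 ∧
      Module.Projective (kGen k x) (MonoidAlgebra k Q8) := by
  obtain rfl : x = shiftQ8 lam mu := hx
  have hx4 := shiftQ8_pow_four lam mu
  have hindep := linearIndependent_shiftQ8_pow_three lam mu h
  have : CharP (MonoidAlgebra k Q8) 2 := charP_of_injective_algebraMap' k 2
  have hsq (y : MonoidAlgebra k Q8) : (1 + y) ^ 2 = 1 + y ^ 2 := by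
    simpa using add_pow_char_of_commute (Commute.one_left y) (p := 2)
  have h4 : (1 + shiftQ8 lam mu) ^ 4 = 1 := by
    rw [show 4 = 2 * 2 from rfl, pow_mul, hsq, hsq, ← pow_mul, hx4, add_zero]
  refine ⟨IsUnit.of_pow_eq_one h4 four_ne_zero, h4, ?_, ?_⟩
  · rw [hsq]
    intro h1
    exact hindep.ne_zero 0 (by simp [pow_succ, add_eq_left.1 h1])
  · have hv : (fun j => shiftQ8 lam mu ^ (4 - 1) * ![1, shiftQ8 (lam + mu) lam] j) =
        ![shiftQ8 lam mu ^ 3, shiftQ8 lam mu ^ 3 * shiftQ8 (lam + mu) lam] := by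
      ext j; fin_cases j <;> simp
    have : Module.Free (kGen k (shiftQ8 lam mu)) (MonoidAlgebra k Q8) :=
      Module.free_adjoin_of_pow_eq_zero hx4 (hv ▸ hindep)
        (by simp [Module.finrank_eq_card_basis (MonoidAlgebra.basis Q8 k), QuaternionGroup.card])
    infer_instance
end

section
/- Let k be a field of characteristic 2, λ, μ ∈ k, and set x = λ(s−1) + μ(t−1) in kQ₈. Then x² = ((λ² + μ²)·1 + λμ·st)·(z−1). Moreover, if λ² + λμ + μ² ≠ 0 then (λ² + μ²)·1 + λμ·st is a unit in kQ₈, so x² = u·(z−1) for a unit u. -/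
/-- For `x = λ(s-1) + μ(t-1)` in `kQ₈` one has
`x² = ((λ² + μ²)·1 + λμ·st)·(z-1)`, and if `λ² + λμ + μ² ≠ 0` then
`(λ² + μ²)·1 + λμ·st` is a unit of `kQ₈`. -/
theorem stmt16 (k : Type) [Field k] [CharP k 2]
    (lam mu : k)
    (x : MonoidAlgebra k Q8)
    (hx : x = lam • (MonoidAlgebra.of k Q8 sQ8 - 1) +
        mu • (MonoidAlgebra.of k Q8 tQ8 - 1)) :
    x ^ 2 = ((lam ^ 2 + mu ^ 2) • (1 : MonoidAlgebra k Q8) +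
        (lam * mu) • MonoidAlgebra.of k Q8 (sQ8 * tQ8)) *
        (MonoidAlgebra.of k Q8 zQ8 - 1) ∧
      (lam ^ 2 + lam * mu + mu ^ 2 ≠ 0 →
        IsUnit ((lam ^ 2 + mu ^ 2) • (1 : MonoidAlgebra k Q8) +
          (lam * mu) • MonoidAlgebra.of k Q8 (sQ8 * tQ8))) := by
  have h2 : (2 : k) = 0 := by exact_mod_cast CharP.cast_eq_zero k 2
  set f := MonoidAlgebra.of k Q8 with hf
  have gSS : sQ8 * sQ8 = zQ8 := rfl
  have gTT : tQ8 * tQ8 = zQ8 := by decide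
  have gTS : tQ8 * sQ8 = QuaternionGroup.xa 1 := by decide
  have gPP : (sQ8 * tQ8) * (sQ8 * tQ8) = zQ8 := by decide
  have gZZ : zQ8 * zQ8 = 1 := by decide
  have gPZ : (sQ8 * tQ8) * zQ8 = QuaternionGroup.xa 1 := by decide
  have gZP : zQ8 * (sQ8 * tQ8) = QuaternionGroup.xa 1 := by decide
  have hSS : f sQ8 * f sQ8 = f zQ8 := by rw [← map_mul, gSS]
  have hTT : f tQ8 * f tQ8 = f zQ8 := by rw [← map_mul, gTT]
  have hST : f sQ8 * f tQ8 = f (sQ8 * tQ8) := by rw [← map_mul]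
  have hTS : f tQ8 * f sQ8 = f (QuaternionGroup.xa 1) := by rw [← map_mul, gTS]
  have hPP : f (sQ8*tQ8) * f (sQ8*tQ8) = f zQ8 := by rw [← map_mul, gPP]
  have hZZ : f zQ8 * f zQ8 = 1 := by rw [← map_mul, gZZ, map_one]
  have hPZ : f (sQ8*tQ8) * f zQ8 = f (QuaternionGroup.xa 1) := by rw [← map_mul, gPZ]
  have hZP : f zQ8 * f (sQ8*tQ8) = f (QuaternionGroup.xa 1) := by rw [← map_mul, gZP]
  constructor
  · rw [hx, pow_two]
    simp only [mul_add, add_mul, mul_sub, sub_mul, smul_sub, smul_add, smul_smul,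
      mul_smul_comm, smul_mul_assoc, one_mul, mul_one,
      hSS, hTT, hST, hTS, hPZ]
    match_scalars
    · linear_combination (0 : k) * h2
    · linear_combination (-(lam*mu) - lam^2) * h2
    · linear_combination (0 : k) * h2
    · linear_combination (lam*mu + lam^2 + mu^2) * h2
    · linear_combination (-(lam*mu) - mu^2) * h2
    · linear_combination (lam*mu) * h2
  · intro h
    set u : MonoidAlgebra k Q8 :=
      (lam ^ 2 + mu ^ 2) • (1 : MonoidAlgebra k Q8) + (lam * mu) • f (sQ8 * tQ8) with hu
    have key : u * u * (u * u) = ((lam ^ 2 + lam * mu + mu ^ 2) ^ 4) • 1 := by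
      rw [hu]
      simp only [mul_add, add_mul, smul_add, smul_smul, mul_smul_comm, smul_mul_assoc,
        one_mul, mul_one, hPP, hZZ, hPZ, hZP]
      match_scalars
      · linear_combination (-(2*lam*mu^7 + 3*lam^2*mu^6 + 8*lam^3*mu^5 + 6*lam^4*mu^4 + 8*lam^5*mu^3 + 3*lam^6*mu^2 + 2*lam^7*mu)) * h2
      · linear_combination (2*lam*mu^7 + 6*lam^3*mu^5 + 6*lam^5*mu^3 + 2*lam^7*mu) * h2
      · linear_combination (3*lam^2*mu^6 + 6*lam^4*mu^4 + 3*lam^6*mu^2) * h2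
      · linear_combination (2*lam^3*mu^5 + 2*lam^5*mu^3) * h2
    have hc : (lam ^ 2 + lam * mu + mu ^ 2) ^ 4 ≠ 0 := pow_ne_zero _ h
    set c := (lam ^ 2 + lam * mu + mu ^ 2) ^ 4 with hcdef
    refine ⟨⟨u, c⁻¹ • (u * (u * u)), ?_, ?_⟩, rfl⟩
    · rw [mul_smul_comm, ← mul_assoc, ← mul_assoc, mul_assoc (u*u), key,
        smul_smul, inv_mul_cancel₀ hc, one_smul]
    · rw [smul_mul_assoc, mul_assoc, mul_assoc, ← mul_assoc u u (u*u), key,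
        smul_smul, inv_mul_cancel₀ hc, one_smul]
end

section
/- Let k be a field of characteristic 2, let λ, μ ∈ k satisfy λ² + λμ + μ² ≠ 0, and set x = λ(s−1) + μ(t−1) in kQ₈. Set M = kQ₈·(z−1)·x and N = kQ₈·x. Then the set of z-fixed points of N equals kQ₈·(z−1); that is, {a ∈ N : z·a = a} = kQ₈·(z−1), and in particular M ⊆ kQ₈·(z−1). -/
namespace MonoidAlgebra

variable {k G : Type*}

instance charP [Semiring k] [Monoid G] (p : ℕ) [CharP k p] : CharP (MonoidAlgebra k G) p :=
  charP_of_injective_ringHom (f := singleOneRingHom) single_right_injective p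

variable [Semiring k] [Group G]

theorem of_mul_eq_self_iff_mem_span_singleton {z : G} (hz : z ∈ Subgroup.center G)
    (hz2 : z * z = 1) (hz1 : z ≠ 1) (f : MonoidAlgebra k G) :
    of k G z * f = f ↔ f ∈ Submodule.span (MonoidAlgebra k G) {of k G z + 1} := by
  have hzf : ∀ a : MonoidAlgebra k G, Commute (of k G z) a :=
    of_commute fun g => (Subgroup.mem_center_iff.1 hz g).symm
  rw [Submodule.mem_span_singleton]
  constructor
  · intro hf
    have hcoeff : ∀ g, f.coeff (g * z) = f.coeff g := fun g => by
      rw [← congrArg (fun a => a.coeff g) hf, of_apply, coeff_single_mul_apply, one_mul,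
        Subgroup.mem_center_iff.1 hz, inv_eq_of_mul_eq_one_right hz2]
    classical
    -- `{g | g < g * z}` is a transversal of the cosets `{g, g * z}`
    let : LinearOrder G := linearOrderOfSTO WellOrderingRel
    refine ⟨ofCoeff (f.coeff.filter fun g => g < g * z), ?_⟩
    ext g
    have hgz : g * z * z = g := by rw [mul_assoc, hz2, mul_one]
    have hne : g ≠ g * z := fun h => hz1 (by simpa using h)
    simp only [smul_eq_mul, mul_add, mul_one, coeff_add, Finsupp.add_apply, of_apply,
      coeff_mul_single_apply, inv_eq_of_mul_eq_one_right hz2, Finsupp.filter_apply, hgz]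
    rcases hne.lt_or_gt with hlt | hgt
    · simp [hlt, hlt.asymm]
    · simp [hgt, hgt.not_gt, hcoeff]
  · rintro ⟨a, rfl⟩
    rw [smul_eq_mul, ← mul_assoc, (hzf a).eq, mul_assoc, mul_add, ← map_mul, hz2, map_one,
      mul_one, add_comm]

end MonoidAlgebra

section CharTwo

variable {k R : Type*} [CommSemiring k] [Ring R] [Algebra k R] [CharP R 2]

theorem sq_smul_add_smul_of_quaternion {s t z : R} (hs : s * s = z) (ht : t * t = z)
    (hts : t * s = z * (s * t)) (lam mu : k) :
    (lam • (s - 1) + mu • (t - 1)) ^ 2 =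
      (z + 1) * ((lam ^ 2 + mu ^ 2) • 1 + (lam * mu) • (s * t)) := by
  have h_sq : ∀ y : R, (y - 1) * (y - 1) = y * y + 1 := fun y => by
    rw [← sq, sub_pow_char_of_commute _ (Commute.one_right y), one_pow, sq,
      CharTwo.sub_eq_add]
  have h_anti : (s - 1) * (t - 1) + (t - 1) * (s - 1) = (z + 1) * (s * t) := by
    have h2 : (s - 1) * (t - 1) + (t - 1) * (s - 1) = s * t + t * s - 2 * (s + t - 1) := by
      noncomm_ring
    rw [h2, CharTwo.two_eq_zero, zero_mul, sub_zero, hts, add_mul, one_mul, add_comm]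
  calc (lam • (s - 1) + mu • (t - 1)) ^ 2
      = (lam ^ 2) • ((s - 1) * (s - 1)) + (mu ^ 2) • ((t - 1) * (t - 1)) +
          (lam * mu) • ((s - 1) * (t - 1) + (t - 1) * (s - 1)) := by
        simp only [sq, add_mul, mul_add, smul_mul_smul_comm]
        module
    _ = (z + 1) * ((lam ^ 2 + mu ^ 2) • 1 + (lam * mu) • (s * t)) := by
        rw [h_sq, h_sq, hs, ht, h_anti, mul_add, mul_smul_comm, mul_smul_comm, mul_one, add_smul]

theorem smul_one_add_smul_pow_four {c : R} (hc : c ^ 4 = 1) (a b : k) :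
    (a • 1 + b • c) ^ 4 = (a + b) ^ 4 • (1 : R) := by
  have hfrob : ∀ x y : R, Commute x y → (x + y) ^ 4 = x ^ 4 + y ^ 4 :=
    fun x y h => add_pow_char_pow_of_commute 2 2 h
  calc (a • 1 + b • c) ^ 4 = (algebraMap k R a + algebraMap k R b * c) ^ 4 := by
        rw [Algebra.smul_def, Algebra.smul_def, mul_one]
    _ = algebraMap k R a ^ 4 + algebraMap k R b ^ 4 := by
        rw [hfrob _ _ (Algebra.commute_algebraMap_left _ _),
          (Algebra.commute_algebraMap_left b c).mul_pow, hc, mul_one]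
    _ = (a + b) ^ 4 • (1 : R) := by
        rw [← hfrob _ _ (Algebra.commute_algebraMap_left _ _), ← map_add, ← map_pow,
          Algebra.algebraMap_eq_smul_one]

end CharTwo

theorem Submodule.mem_span_singleton_of_mul_self_eq {R : Type*} [Semiring R] {x c w : R}
    (hw : IsUnit w) (hcw : Commute c w) (hx : x * x = c * w) : c ∈ R ∙ x := by
  obtain ⟨u, rfl⟩ := hw
  refine Submodule.mem_span_singleton.2 ⟨↑u⁻¹ * x, ?_⟩
  rw [smul_eq_mul, mul_assoc, hx, hcw.eq, ← mul_assoc, Units.inv_mul, one_mul]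

open MonoidAlgebra

/-- With `M = kQ₈·(z-1)·x` and `N = kQ₈·x`, the set of `z`-fixed points of `N`
equals `kQ₈·(z-1)`; in particular `M ⊆ kQ₈·(z-1)`. -/
theorem stmt18 (k : Type) [Field k] [CharP k 2]
    (lam mu : k) (h : lam ^ 2 + lam * mu + mu ^ 2 ≠ 0)
    (x : MonoidAlgebra k Q8)
    (hx : x = lam • (MonoidAlgebra.of k Q8 sQ8 - 1) +
        mu • (MonoidAlgebra.of k Q8 tQ8 - 1))
    (M N : Submodule (MonoidAlgebra k Q8) (MonoidAlgebra k Q8))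
    (hM : M = Submodule.span (MonoidAlgebra k Q8)
        {(MonoidAlgebra.of k Q8 zQ8 - 1) * x})
    (hN : N = Submodule.span (MonoidAlgebra k Q8) {x}) :
    {a : MonoidAlgebra k Q8 | a ∈ N ∧ MonoidAlgebra.of k Q8 zQ8 * a = a}
        = (Submodule.span (MonoidAlgebra k Q8) {MonoidAlgebra.of k Q8 zQ8 - 1}
            : Submodule (MonoidAlgebra k Q8) (MonoidAlgebra k Q8)) ∧
      M ≤ Submodule.span (MonoidAlgebra k Q8) {MonoidAlgebra.of k Q8 zQ8 - 1} := by
  set Z := of k Q8 zQ8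
  set w : MonoidAlgebra k Q8 :=
    (lam ^ 2 + mu ^ 2) • 1 + (lam * mu) • (of k Q8 sQ8 * of k Q8 tQ8)
  have hZ_center : zQ8 ∈ Subgroup.center Q8 := Subgroup.mem_center_iff.2 (by decide)
  have hZ_comm : ∀ a, Commute (Z + 1) a := fun a =>
    (of_commute (fun g => (Subgroup.mem_center_iff.1 hZ_center g).symm) a).add_left
      (Commute.one_left a)
  have hx_sq : x * x = (Z + 1) * w := by
    rw [hx, ← sq]
    refine sq_smul_add_smul_of_quaternion (z := Z) ?_ ?_ ?_ lam mu
    · rw [← map_mul]; rfl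
    · rw [← map_mul, show tQ8 * tQ8 = zQ8 by decide]
    · rw [← map_mul, ← map_mul, ← map_mul, show tQ8 * sQ8 = zQ8 * (sQ8 * tQ8) by decide]
  have hw_unit : IsUnit w := by
    have hst : (of k Q8 sQ8 * of k Q8 tQ8) ^ 4 = 1 := by
      rw [← map_mul, ← map_pow, show (sQ8 * tQ8) ^ 4 = 1 by decide, map_one]
    rw [← isUnit_pow_iff four_ne_zero, smul_one_add_smul_pow_four hst, add_right_comm,
      ← Algebra.algebraMap_eq_smul_one]
    exact ((pow_ne_zero 4 h).isUnit).map _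
  have h_fixed : ∀ a, Z * a = a ↔ a ∈ Submodule.span (MonoidAlgebra k Q8) {Z + 1} :=
    of_mul_eq_self_iff_mem_span_singleton hZ_center (by decide) (by decide)
  have h_span_le : Submodule.span (MonoidAlgebra k Q8) {Z + 1} ≤ N := by
    rw [hN, Submodule.span_singleton_le_iff_mem]
    exact Submodule.mem_span_singleton_of_mul_self_eq hw_unit (hZ_comm w) hx_sq
  rw [CharTwo.sub_eq_add] at hM ⊢
  refine ⟨Set.ext fun a => ?_, ?_⟩
  · rw [Set.mem_ofPred_eq, SetLike.mem_coe, ← h_fixed]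
    exact and_iff_right_of_imp fun ha => h_span_le ((h_fixed a).1 ha)
  · rw [hM, Submodule.span_singleton_le_iff_mem, Submodule.mem_span_singleton]
    exact ⟨x, (hZ_comm x).eq.symm⟩
end

section
/- Let k be a field of characteristic 2, let λ, μ ∈ k satisfy λ² + λμ + μ² ≠ 0, and set x = λ(s−1) + μ(t−1) in kQ₈. Set M = kQ₈·(z−1)·x and N = kQ₈·x. Then for every kQ₈-module homomorphism φ : M → N there exists c ∈ kQ₈ such that φ(m) = c·m for all m ∈ M; in particular the range of φ is contained in M. -/
open QuaternionGroup MonoidAlgebra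

namespace MonoidAlgebra

variable {k G : Type*} [CommSemiring k] [Group G]

theorem mul_left_comm_of_commutators_fix {z : G}
    (hG : ∀ u v : G, u * v = v * u ∨ u * v = v * u * z) {w : MonoidAlgebra k G}
    (hw : of k G z * w = w) (b c : MonoidAlgebra k G) : b * (c * w) = c * (b * w) := by
  have hof (u v : G) : of k G u * (of k G v * w) = of k G v * (of k G u * w) := by
    simp only [← mul_assoc, ← map_mul]
    rcases hG u v with h | h
    · rw [h]
    · rw [h, map_mul, mul_assoc, hw]
  induction b using MonoidAlgebra.induction_on with
  | of u =>
    induction c using MonoidAlgebra.induction_on with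
    | of v => exact hof u v
    | add c c' hc hc' => rw [add_mul, mul_add, hc, hc', add_mul]
    | smul r c hc => rw [smul_mul_assoc, mul_smul_comm, hc, smul_mul_assoc]
  | add b b' hb hb' => rw [add_mul, hb, hb', ← mul_add, add_mul]
  | smul r b hb => rw [smul_mul_assoc, hb, smul_mul_assoc, mul_smul_comm]

end MonoidAlgebra

theorem LinearMap.apply_eq_mul_of_span_singleton {R : Type*} [Ring R] {M N : Submodule R R}
    (φ : M →ₗ[R] N) (g : M) (hM : M ≤ Submodule.span R {(g : R)}) {c : R}
    (hφ : (φ g : R) = c * g) (hc : ∀ b, b * (c * g) = c * (b * g)) (m : M) :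
    (φ m : R) = c * m := by
  obtain ⟨b, hb⟩ := Submodule.mem_span_singleton.mp (hM m.2)
  obtain rfl : b • g = m := Subtype.ext hb
  rw [map_smul, Submodule.coe_smul, hφ, smul_eq_mul, hc]
  rfl

section Q8

variable {k : Type*} [CommRing k]

noncomputable def xQ8 (lam mu : k) : MonoidAlgebra k Q8 :=
  lam • (of k Q8 sQ8 - 1) + mu • (of k Q8 tQ8 - 1)

theorem zQ8_sub_one_commute (w : MonoidAlgebra k Q8) : Commute (of k Q8 zQ8 - 1) w :=
  (of_commute (fun q => (by decide : ∀ q : Q8, zQ8 * q = q * zQ8) q) w).sub_left (.one_left w)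

variable [CharP k 2] (lam mu : k)

theorem coeff_xQ8_mul (w : MonoidAlgebra k Q8) (q : Q8) :
    (xQ8 lam mu * w).coeff q =
      lam * w.coeff (sQ8⁻¹ * q) + mu * w.coeff (tQ8⁻¹ * q) + (lam + mu) * w.coeff q := by
  rw [xQ8, one_def (R := k) (M := Q8)]
  simp only [of_apply, add_mul, sub_mul, smul_mul_assoc, coeff_add, coeff_sub, coeff_smul,
    Finsupp.add_apply, Finsupp.sub_apply, Finsupp.smul_apply, coeff_single_mul_apply, inv_one,
    one_mul, smul_eq_mul]
  grind

theorem coeff_xQ8 (q : Q8) :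
    (xQ8 lam mu).coeff q =
      (if q = sQ8 then lam else 0) + (if q = tQ8 then mu else 0) +
        (if q = 1 then lam + mu else 0) := by
  rw [xQ8, one_def (R := k) (M := Q8)]
  simp only [of_apply, coeff_add, coeff_sub, coeff_smul, Finsupp.add_apply, Finsupp.sub_apply,
    Finsupp.smul_apply, coeff_single, Finsupp.single_apply, smul_eq_mul]
  split_ifs <;> grind [sQ8, tQ8]

theorem coeff_zQ8_sub_one_mul (w : MonoidAlgebra k Q8) (q : Q8) :
    ((of k Q8 zQ8 - 1) * w).coeff q = w.coeff (zQ8 * q) + w.coeff q := by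
  rw [one_def (R := k) (M := Q8)]
  simp only [of_apply, sub_mul, coeff_sub, Finsupp.sub_apply, coeff_single_mul_apply, inv_one,
    one_mul]
  rw [show zQ8⁻¹ = zQ8 from rfl, CharTwo.sub_eq_add]

theorem zQ8_sub_one_mul_self : (of k Q8 zQ8 - 1) * (of k Q8 zQ8 - 1) = 0 := by
  ext q
  rw [one_def (R := k) (M := Q8)]
  simp only [zQ8, sQ8, of_apply, mul_sub, sub_mul, single_mul_single]
  rcases q with i | i <;> fin_cases i <;> simp +decide [Finsupp.single_apply] <;> grind

theorem stQ8_sub_one_mul_self :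
    (of k Q8 (sQ8 * tQ8) - 1) * (of k Q8 (sQ8 * tQ8) - 1) = of k Q8 zQ8 - 1 := by
  ext q
  rw [one_def (R := k) (M := Q8)]
  simp only [zQ8, sQ8, tQ8, of_apply, mul_sub, sub_mul, single_mul_single]
  rcases q with i | i <;> fin_cases i <;> simp +decide [Finsupp.single_apply] <;> grind

theorem xQ8_mul_self : xQ8 lam mu * xQ8 lam mu = (of k Q8 zQ8 - 1) *
    ((lam ^ 2 + lam * mu + mu ^ 2) • 1 + (lam * mu) • (of k Q8 (sQ8 * tQ8) - 1)) := by
  ext q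
  rw [xQ8, one_def (R := k) (M := Q8)]
  simp only [zQ8, sQ8, tQ8, of_apply, mul_add, add_mul, mul_sub, sub_mul, smul_mul_assoc,
    mul_smul_comm, single_mul_single]
  rcases q with i | i <;> fin_cases i <;> simp +decide [Finsupp.single_apply] <;> grind

theorem of_zQ8_mul_zQ8_sub_one_mul (w : MonoidAlgebra k Q8) :
    of k Q8 zQ8 * ((of k Q8 zQ8 - 1) * w) = (of k Q8 zQ8 - 1) * w := by
  rw [← mul_assoc, ← sub_add_cancel (of k Q8 zQ8) 1, add_mul (of k Q8 zQ8 - 1), sub_add_cancel,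
    zQ8_sub_one_mul_self, zero_add, one_mul]

theorem xQ8_mul_zQ8_sub_one_mul_xQ8 : xQ8 lam mu * ((of k Q8 zQ8 - 1) * xQ8 lam mu) = 0 := by
  rw [← mul_assoc, ← (zQ8_sub_one_commute _).eq, mul_assoc, xQ8_mul_self, ← mul_assoc,
    zQ8_sub_one_mul_self, zero_mul]

end Q8

section Q8Field

variable {k : Type*} [Field k] [CharP k 2] (lam mu : k)

/-- `D - λμ n` inverts `u = D + λμ n` up to a multiple of `n² = z - 1`, which `z - 1` kills. -/
theorem zQ8_sub_one_mul_eq_zero_of_xQ8_mul_eq_zero (h : lam ^ 2 + lam * mu + mu ^ 2 ≠ 0)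
    {y : MonoidAlgebra k Q8} (hy : xQ8 lam mu * y = 0) : (of k Q8 zQ8 - 1) * y = 0 := by
  set D := lam ^ 2 + lam * mu + mu ^ 2
  have hu : (D • 1 - (lam * mu) • (of k Q8 (sQ8 * tQ8) - 1)) *
      (D • 1 + (lam * mu) • (of k Q8 (sQ8 * tQ8) - 1)) =
      D ^ 2 • 1 - (lam * mu) ^ 2 • (of k Q8 zQ8 - 1) := by
    rw [← stQ8_sub_one_mul_self]
    simp only [sub_mul, mul_add, smul_mul_smul_comm, one_mul, mul_one]
    module
  have key : (D • 1 - (lam * mu) • (of k Q8 (sQ8 * tQ8) - 1)) *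
      (xQ8 lam mu * (xQ8 lam mu * y)) = D ^ 2 • ((of k Q8 zQ8 - 1) * y) := by
    rw [← mul_assoc (xQ8 lam mu), xQ8_mul_self, mul_assoc, ← mul_assoc _ (of k Q8 zQ8 - 1),
      ← (zQ8_sub_one_commute _).eq, mul_assoc, ← mul_assoc _ _ y, hu]
    have hZZ := zQ8_sub_one_mul_self (k := k)
    generalize of k Q8 zQ8 - 1 = Z at hZZ ⊢
    rw [sub_mul, mul_sub, smul_mul_assoc, one_mul, smul_mul_assoc, mul_smul_comm, mul_smul_comm,
      ← mul_assoc, hZZ, zero_mul, smul_zero, sub_zero]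
  rw [hy, mul_zero, mul_zero, eq_comm, smul_eq_zero] at key
  exact key.resolve_left (pow_ne_zero 2 h)

theorem exists_eq_mul_of_xQ8_mul_eq_zero (h : lam ^ 2 + lam * mu + mu ^ 2 ≠ 0)
    {y : MonoidAlgebra k Q8} (hy : xQ8 lam mu * y = 0) :
    ∃ c, y = c * ((of k Q8 zQ8 - 1) * xQ8 lam mu) := by
  have hZ (q : Q8) : y.coeff (zQ8 * q) = y.coeff q := by
    have := congr(($(zQ8_sub_one_mul_eq_zero_of_xQ8_mul_eq_zero lam mu h hy)).coeff q)
    rwa [coeff_zQ8_sub_one_mul, coeff_zero, Finsupp.zero_apply, CharTwo.add_eq_zero] at this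
  have hE (q : Q8) :
      lam * y.coeff (sQ8⁻¹ * q) + mu * y.coeff (tQ8⁻¹ * q) + (lam + mu) * y.coeff q = 0 := by
    rw [← coeff_xQ8_mul, hy]; rfl
  have hz2 : y.coeff (a 2) = y.coeff (a 0) := hZ (a 0)
  have hz3 : y.coeff (a 3) = y.coeff (a 1) := hZ (a 1)
  have hzx2 : y.coeff (xa 2) = y.coeff (xa 0) := hZ (xa 0)
  have hzx3 : y.coeff (xa 3) = y.coeff (xa 1) := hZ (xa 1)
  have e1 : lam * y.coeff (a 3) + mu * y.coeff (xa 2) + (lam + mu) * y.coeff (a 0) = 0 :=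
    hE (a 0)
  have et : lam * y.coeff (xa 1) + mu * y.coeff (a 0) + (lam + mu) * y.coeff (xa 0) = 0 :=
    hE (xa 0)
  have ets : lam * y.coeff (xa 2) + mu * y.coeff (a 1) + (lam + mu) * y.coeff (xa 1) = 0 :=
    hE (xa 1)
  -- `y = α (z - 1) x + y(ts) (z - 1)(s - 1)(t - 1)` for some scalar `α`, and
  -- `(z - 1) ((λ + μ)(s - 1) + λ(t - 1)) x = D (z - 1)(s - 1)(t - 1)`.
  refine ⟨(lam ^ 2 + lam * mu + mu ^ 2)⁻¹ •
    (((lam + mu) * (y.coeff (a 1) + y.coeff (xa 1)) + mu * y.coeff (xa 0)) • 1 +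
      ((lam + mu) * y.coeff (xa 1)) • of k Q8 sQ8 + (lam * y.coeff (xa 1)) • of k Q8 tQ8), ?_⟩
  rw [smul_mul_assoc, eq_inv_smul_iff₀ h]
  have hg := coeff_zQ8_sub_one_mul (xQ8 lam mu)
  generalize (of k Q8 zQ8 - 1) * xQ8 lam mu = g at hg ⊢
  ext q
  simp only [add_mul, smul_mul_assoc, one_mul, coeff_add, coeff_smul, Finsupp.add_apply,
    Finsupp.smul_apply, smul_eq_mul, of_apply, coeff_single_mul_apply, hg, coeff_xQ8]
  have hQ8 : ∀ q : Q8, q = a 0 ∨ q = a 1 ∨ q = a 2 ∨ q = a 3 ∨ q = xa 0 ∨ q = xa 1 ∨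
      q = xa 2 ∨ q = xa 3 := by decide
  rcases hQ8 q with rfl | rfl | rfl | rfl | rfl | rfl | rfl | rfl <;>
    simp +decide only [ite_true, ite_false] <;> grind

end Q8Field

theorem stmt19_general (k : Type) [Field k] [CharP k 2]
    (lam mu : k) (h : lam ^ 2 + lam * mu + mu ^ 2 ≠ 0)
    (x : MonoidAlgebra k Q8)
    (hx : x = lam • (MonoidAlgebra.of k Q8 sQ8 - 1) +
        mu • (MonoidAlgebra.of k Q8 tQ8 - 1))
    (M N : Submodule (MonoidAlgebra k Q8) (MonoidAlgebra k Q8))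
    (hM : M = Submodule.span (MonoidAlgebra k Q8)
        {(MonoidAlgebra.of k Q8 zQ8 - 1) * x})
    (φ : M →ₗ[MonoidAlgebra k Q8] N) :
    (∃ c : MonoidAlgebra k Q8, ∀ m : M, (φ m : MonoidAlgebra k Q8) = c * (m : MonoidAlgebra k Q8)) ∧
      ∀ m : M, (φ m : MonoidAlgebra k Q8) ∈ M := by
  obtain rfl : x = xQ8 lam mu := hx
  let g : M := ⟨_, hM ▸ Submodule.mem_span_singleton_self _⟩
  have hφg : xQ8 lam mu * (φ g : MonoidAlgebra k Q8) = 0 := by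
    have hxg : xQ8 lam mu • g = 0 := Subtype.ext (xQ8_mul_zQ8_sub_one_mul_xQ8 lam mu)
    rw [← smul_eq_mul, ← Submodule.coe_smul, ← map_smul, hxg, map_zero, Submodule.coe_zero]
  obtain ⟨c, hc⟩ := exists_eq_mul_of_xQ8_mul_eq_zero lam mu h hφg
  have hφ := φ.apply_eq_mul_of_span_singleton g hM.le hc fun b =>
    mul_left_comm_of_commutators_fix (by decide) (of_zQ8_mul_zQ8_sub_one_mul _) b c
  exact ⟨⟨c, hφ⟩, fun m => hφ m ▸ M.smul_mem c m.2⟩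

/-- Every `kQ₈`-homomorphism `φ : M → N`, where `M = kQ₈·(z-1)·x ⊆ N = kQ₈·x`,
is given by left multiplication by some `c ∈ kQ₈`; in particular the range of
`φ` is contained in `M`. -/
theorem stmt19 (k : Type) [Field k] [CharP k 2]
    (lam mu : k) (h : lam ^ 2 + lam * mu + mu ^ 2 ≠ 0)
    (x : MonoidAlgebra k Q8)
    (hx : x = lam • (MonoidAlgebra.of k Q8 sQ8 - 1) +
        mu • (MonoidAlgebra.of k Q8 tQ8 - 1))
    (M N : Submodule (MonoidAlgebra k Q8) (MonoidAlgebra k Q8))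
    (hM : M = Submodule.span (MonoidAlgebra k Q8)
        {(MonoidAlgebra.of k Q8 zQ8 - 1) * x})
    (hN : N = Submodule.span (MonoidAlgebra k Q8) {x})
    (φ : M →ₗ[MonoidAlgebra k Q8] N) :
    (∃ c : MonoidAlgebra k Q8, ∀ m : M, (φ m : MonoidAlgebra k Q8) = c * (m : MonoidAlgebra k Q8)) ∧
      ∀ m : M, (φ m : MonoidAlgebra k Q8) ∈ M :=
  stmt19_general k lam mu h x hx M N hM φ
end
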